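/- arXiv:1307.4830 — 10 statements merged into one kernel-verified Lean document; each statement's English description precedes it below -/
import Mathlib

section
/- Let U be a unital associative ℂ-algebra and let λᵢ, λⱼ be distinct nonzero complex numbers. Then for every integer n ≥ 0, in U[[z^{±1},w^{±1}]]: ∂^{(n)}_{λⱼw}δ(z−λⱼw) = (λⱼ−λᵢ)^{−(n+1)} · (z−λᵢw) · w^{−n−1} · Σ_{k=0}^{n} (−1)^{n−k} (λⱼ−λᵢ)^k w^k ∂^{(k)}_{λⱼw}δ(z−λⱼw). -/
/- Formal distributions `a(z,w) = Σ_{m,n∈ℤ} a_{m,n} z^m w^n ∈ U[[z^{±1},w^{±1}]]` are encoded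
as their coefficient functions `ℤ → ℤ → U`. -/

noncomputable section

/-- Coefficientwise multiplication of a two-variable formal distribution by `(z - λ w)`. -/
def mulZsubLW {M : Type*} [AddCommGroup M] [Module ℂ M] (lam : ℂ) (a : ℤ → ℤ → M) :
    ℤ → ℤ → M :=
  fun m n => a (m - 1) n - lam • a m (n - 1)

/-- Coefficientwise multiplication by `w^k`, `k ∈ ℤ`. -/
def mulWpow {M : Type*} (k : ℤ) (a : ℤ → ℤ → M) : ℤ → ℤ → M := fun m n => a m (n - k)

/-- The formal delta function `δ(z - λw) = Σ_{m∈ℤ} λ^{-m-1} z^m w^{-m-1} ∈ U[[z^{±1},w^{±1}]]`. -/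
def fdelta (U : Type*) [Ring U] [Algebra ℂ U] (lam : ℂ) : ℤ → ℤ → U :=
  fun m n => if n = -m - 1 then (lam ^ (-m - 1) : ℂ) • (1 : U) else 0

/-- The formal derivative `∂_w`, acting coefficientwise. -/
def derivW {M : Type*} [AddCommGroup M] [Module ℂ M] (a : ℤ → ℤ → M) : ℤ → ℤ → M :=
  fun m n => ((n + 1 : ℤ) : ℂ) • a m (n + 1)

/-- `∂_{λw} := λ⁻¹ ∂_w`. -/
def derivLW {M : Type*} [AddCommGroup M] [Module ℂ M] (lam : ℂ) (a : ℤ → ℤ → M) : ℤ → ℤ → M :=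
  fun m n => lam⁻¹ • derivW a m n

/-- The divided power `∂^{(l)}_{λw} := (∂_{λw})^l / l!`. -/
def divPowDerivLW {M : Type*} [AddCommGroup M] [Module ℂ M] (lam : ℂ) (l : ℕ)
    (a : ℤ → ℤ → M) : ℤ → ℤ → M :=
  fun m n => ((l.factorial : ℂ))⁻¹ • ((derivLW lam)^[l] a) m n



/-- Rising-product `(m+1)(m+2)⋯(m+k)` as a complex number. -/
def P (m : ℤ) (k : ℕ) : ℂ := ∏ j ∈ Finset.range k, ((m : ℂ) + 1 + j)

lemma P_succ (m : ℤ) (k : ℕ) : P m (k+1) = P m k * ((m:ℂ) + 1 + k) :=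
  Finset.prod_range_succ _ _

lemma P_pred_succ (m : ℤ) (k : ℕ) : P (m-1) (k+1) = (m:ℂ) * P m k := by
  unfold P
  rw [Finset.prod_range_succ']
  have h0 : ((m - 1 : ℤ) : ℂ) + 1 + (0:ℕ) = (m : ℂ) := by push_cast; ring
  rw [h0, mul_comm]
  congr 1
  refine Finset.prod_congr rfl fun i _ => ?_
  push_cast; ring

lemma telescope (li lj : ℂ) (hlj : lj ≠ 0) (m : ℤ) (N : ℕ) :
    ∑ k ∈ Finset.range (N+1),
      (lj-li)^k * ((k.factorial:ℂ))⁻¹ * ((lj^k)⁻¹) * (lj * P (m-1) k - li * P m k)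
    = (lj-li)^(N+1) * (lj^N)⁻¹ * ((N.factorial:ℂ))⁻¹ * P m N := by
  induction N with
  | zero => simp [P]
  | succ N ih =>
    rw [Finset.sum_range_succ, ih, P_pred_succ, P_succ]
    have hfac : ((N+1).factorial : ℂ) = (N+1) * N.factorial := by
      rw [Nat.factorial_succ]; push_cast; ring
    have hf0 : (N.factorial : ℂ) ≠ 0 := Nat.cast_ne_zero.mpr (Nat.factorial_ne_zero N)
    have hf1 : ((N:ℂ)+1) ≠ 0 := by
      have : ((N+1 : ℕ) : ℂ) ≠ 0 := Nat.cast_ne_zero.mpr (Nat.succ_ne_zero N)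
      push_cast at this; exact this
    rw [hfac]
    field_simp
    ring

lemma key (li lj : ℂ) (hlj : lj ≠ 0) (hc : lj - li ≠ 0) (n : ℕ) (m : ℤ) :
    ((n.factorial:ℂ))⁻¹ * ((-1:ℂ)^n * lj^(-m-1-(n:ℤ)) * P m n)
    = ((lj-li)^(n+1))⁻¹ *
      ((∑ k ∈ Finset.range (n+1), ((-1:ℂ)^(n-k) * (lj-li)^k) *
          (((k.factorial:ℂ))⁻¹ * ((-1:ℂ)^k * lj^(-(m-1)-1-(k:ℤ)) * P (m-1) k)))
       - li * ∑ k ∈ Finset.range (n+1), ((-1:ℂ)^(n-k) * (lj-li)^k) *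
          (((k.factorial:ℂ))⁻¹ * ((-1:ℂ)^k * lj^(-m-1-(k:ℤ)) * P m k))) := by
  have hz : ∀ k : ℕ, lj ^ (-m-1-(k:ℤ)) = lj^(-m-1) * (lj^k)⁻¹ := fun k => by
    rw [show -m-1-(k:ℤ) = (-m-1) + (-(k:ℤ)) by ring, zpow_add₀ hlj, zpow_neg, zpow_natCast]
  have hz2 : ∀ k : ℕ, lj ^ (-(m-1)-1-(k:ℤ)) = lj * (lj^(-m-1) * (lj^k)⁻¹) := fun k => by
    rw [show -(m-1)-1-(k:ℤ) = 1 + ((-m-1) + (-(k:ℤ))) by ring, zpow_add₀ hlj,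
      zpow_add₀ hlj, zpow_neg, zpow_natCast, zpow_one]
  have hsign : ∀ k ∈ Finset.range (n+1), (-1:ℂ)^(n-k) * (-1:ℂ)^k = (-1:ℂ)^n := fun k hk => by
    rw [← pow_add, Nat.sub_add_cancel (Nat.lt_succ_iff.mp (Finset.mem_range.mp hk))]
  have esum :
      (∑ k ∈ Finset.range (n+1), ((-1:ℂ)^(n-k) * (lj-li)^k) *
          (((k.factorial:ℂ))⁻¹ * ((-1:ℂ)^k * lj^(-(m-1)-1-(k:ℤ)) * P (m-1) k)))
       - li * ∑ k ∈ Finset.range (n+1), ((-1:ℂ)^(n-k) * (lj-li)^k) *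
          (((k.factorial:ℂ))⁻¹ * ((-1:ℂ)^k * lj^(-m-1-(k:ℤ)) * P m k))
      = (-1:ℂ)^n * lj^(-m-1) * ∑ k ∈ Finset.range (n+1),
          (lj-li)^k * ((k.factorial:ℂ))⁻¹ * ((lj^k)⁻¹) * (lj * P (m-1) k - li * P m k) := by
    rw [Finset.mul_sum, Finset.mul_sum, ← Finset.sum_sub_distrib]
    refine Finset.sum_congr rfl fun k hk => ?_
    rw [hz k, hz2 k]
    have hs := hsign k hk
    linear_combination ((lj-li)^k * ((k.factorial:ℂ))⁻¹ * (lj^k)⁻¹ * lj^(-m-1) *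
      (lj * P (m-1) k - li * P m k)) * hs
  rw [esum, telescope li lj hlj m n, hz n]
  have hf0 : (n.factorial : ℂ) ≠ 0 := Nat.cast_ne_zero.mpr (Nat.factorial_ne_zero n)
  field_simp


lemma iter_formula (U : Type*) [Ring U] [Algebra ℂ U] (lj : ℂ) (hlj : lj ≠ 0)
    (k : ℕ) (m p : ℤ) :
    ((derivLW lj)^[k] (fdelta U lj)) m p
      = (if p = -m-1-(k:ℤ) then ((-1:ℂ)^k * lj^(-m-1-(k:ℤ)) * P m k) else 0) • (1:U) := by
  induction k generalizing p with
  | zero =>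
    simp only [Function.iterate_zero, id_eq, fdelta]
    by_cases hp : p = -m-1
    · rw [if_pos hp, if_pos (by omega : p = -m-1-((0:ℕ):ℤ))]
      simp [P, show -m-1-((0:ℕ):ℤ) = -m-1 by omega]
    · rw [if_neg hp, if_neg (by omega : ¬ p = -m-1-((0:ℕ):ℤ)), zero_smul]
  | succ k ih =>
    rw [Function.iterate_succ_apply']
    simp only [derivLW, derivW]
    rw [ih (p+1)]
    by_cases h : p = -m-1-((k:ℕ)+1:ℤ)
    · rw [if_pos (show p+1 = -m-1-(k:ℤ) by omega), if_pos (by exact_mod_cast h)]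
      rw [smul_smul, smul_smul]
      congr 1
      have hp1 : ((p + 1 : ℤ) : ℂ) = -((m:ℂ)+1+(k:ℕ)) := by
        have : (p : ℤ) + 1 = -(m+1+(k:ℕ)) := by omega
        rw [this]; push_cast; ring
      rw [hp1, P_succ,
        show (-m-1-(((k:ℕ)+1 : ℕ):ℤ)) = (-m-1-(k:ℤ)) - 1 by push_cast; ring,
        zpow_sub_one₀ hlj, pow_succ]
      ring
    · rw [if_neg (show ¬ p+1 = -m-1-(k:ℤ) by omega), if_neg (by exact_mod_cast h)]
      simp

lemma D_formula (U : Type*) [Ring U] [Algebra ℂ U] (lj : ℂ) (hlj : lj ≠ 0)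
    (k : ℕ) (m p : ℤ) :
    divPowDerivLW lj k (fdelta U lj) m p
      = (if p = -m-1-(k:ℤ) then
          (((k.factorial:ℂ))⁻¹ * ((-1:ℂ)^k * lj^(-m-1-(k:ℤ)) * P m k)) else 0) • (1:U) := by
  rw [divPowDerivLW, iter_formula U lj hlj k m p]
  split_ifs <;> simp [smul_smul]

/-- For distinct nonzero `λᵢ, λⱼ` and every `n ≥ 0`:
`∂^{(n)}_{λⱼw}δ(z−λⱼw) = (λⱼ−λᵢ)^{−(n+1)} · (z−λᵢw) · w^{−n−1} ·
   Σ_{k=0}^{n} (−1)^{n−k} (λⱼ−λᵢ)^k w^k ∂^{(k)}_{λⱼw}δ(z−λⱼw)`. -/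
theorem delta_factoring_formula (U : Type*) [Ring U] [Algebra ℂ U]
    (li lj : ℂ) (hli : li ≠ 0) (hlj : lj ≠ 0) (hij : li ≠ lj) (n : ℕ) :
    divPowDerivLW lj n (fdelta U lj) =
      ((lj - li) ^ (n + 1))⁻¹ •
        mulZsubLW li
          (mulWpow (-(n : ℤ) - 1)
            (∑ k ∈ Finset.range (n + 1),
              ((-1 : ℂ) ^ (n - k) * (lj - li) ^ k) •
                mulWpow (k : ℤ) (divPowDerivLW lj k (fdelta U lj)))) := by
  have hc : lj - li ≠ 0 := sub_ne_zero.mpr (Ne.symm hij)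
  funext m p
  simp only [Pi.smul_apply, mulZsubLW, mulWpow, Finset.sum_apply, Pi.smul_apply]
  rw [D_formula U lj hlj n m p]
  by_cases hp : p = -m-1-(n:ℤ)
  · have h1 : ∀ k ∈ Finset.range (n+1),
        ((-1:ℂ)^(n-k) * (lj-li)^k) •
            divPowDerivLW lj k (fdelta U lj) (m-1) (p - (-(n:ℤ)-1) - (k:ℤ))
          = (((-1:ℂ)^(n-k) * (lj-li)^k) *
              (((k.factorial:ℂ))⁻¹ * ((-1:ℂ)^k * lj^(-(m-1)-1-(k:ℤ)) * P (m-1) k))) • (1:U) := by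
      intro k _
      rw [D_formula U lj hlj k (m-1) _, if_pos (by omega), smul_smul]
    have h2 : ∀ k ∈ Finset.range (n+1),
        ((-1:ℂ)^(n-k) * (lj-li)^k) •
            divPowDerivLW lj k (fdelta U lj) m (p - 1 - (-(n:ℤ)-1) - (k:ℤ))
          = (((-1:ℂ)^(n-k) * (lj-li)^k) *
              (((k.factorial:ℂ))⁻¹ * ((-1:ℂ)^k * lj^(-m-1-(k:ℤ)) * P m k))) • (1:U) := by
      intro k _
      rw [D_formula U lj hlj k m _, if_pos (by omega), smul_smul]
    rw [Finset.sum_congr rfl h1, Finset.sum_congr rfl h2, ← Finset.sum_smul, ← Finset.sum_smul,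
      if_pos hp, smul_smul, ← sub_smul, smul_smul]
    congr 1
    exact key li lj hlj hc n m
  · have h1 : ∀ k ∈ Finset.range (n+1),
        ((-1:ℂ)^(n-k) * (lj-li)^k) •
            divPowDerivLW lj k (fdelta U lj) (m-1) (p - (-(n:ℤ)-1) - (k:ℤ)) = 0 := by
      intro k _
      rw [D_formula U lj hlj k (m-1) _, if_neg (by omega), zero_smul, smul_zero]
    have h2 : ∀ k ∈ Finset.range (n+1),
        ((-1:ℂ)^(n-k) * (lj-li)^k) •
            divPowDerivLW lj k (fdelta U lj) m (p - 1 - (-(n:ℤ)-1) - (k:ℤ)) = 0 := by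
      intro k _
      rw [D_formula U lj hlj k m _, if_neg (by omega), zero_smul, smul_zero]
    rw [Finset.sum_congr rfl h1, Finset.sum_congr rfl h2, if_neg hp, zero_smul]
    simp

end
end

section
/- (Linear independence of derivatives of delta functions) Let U be a unital associative ℂ-algebra, let λ₁,…,λ_N be distinct nonzero complex numbers and n₁,…,n_N positive integers, and suppose c_{kl}(w) ∈ U[[w^{±1}]] (for 1 ≤ k ≤ N, 0 ≤ l ≤ n_k−1) satisfy Σ_{k=1}^{N} Σ_{l=0}^{n_k−1} c_{kl}(w) ∂^{(l)}_{λ_k w}δ(z−λ_k w) = 0 in U[[z^{±1},w^{±1}]]. Then c_{kl}(w) = 0 for all 1 ≤ k ≤ N and 0 ≤ l ≤ n_k−1. -/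
/- One-variable formal distributions `c(w) = Σ_{n∈ℤ} c_n w^n ∈ U[[w^{±1}]]` are encoded as
`ℤ → U`; two-variable distributions in `U[[z^{±1},w^{±1}]]` as `ℤ → ℤ → U`. -/

noncomputable section

/-- The formal delta function `δ(z - λw) = Σ_{m∈ℤ} λ^{-m-1} z^m w^{-m-1}` (ℂ-valued). -/
def fdeltaC (lam : ℂ) : ℤ → ℤ → ℂ :=
  fun m n => if n = -m - 1 then lam ^ (-m - 1) else 0

/-- The formal derivative `∂_w`, acting coefficientwise. -/
def derivWC (a : ℤ → ℤ → ℂ) : ℤ → ℤ → ℂ :=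
  fun m n => ((n + 1 : ℤ) : ℂ) * a m (n + 1)

/-- `∂_{λw} := λ⁻¹ ∂_w`. -/
def derivLWC (lam : ℂ) (a : ℤ → ℤ → ℂ) : ℤ → ℤ → ℂ :=
  fun m n => lam⁻¹ * derivWC a m n

/-- The divided power `∂^{(l)}_{λw} := (∂_{λw})^l / l!`. -/
def divPowDerivLWC (lam : ℂ) (l : ℕ) (a : ℤ → ℤ → ℂ) : ℤ → ℤ → ℂ :=
  fun m n => ((l.factorial : ℂ))⁻¹ * ((derivLWC lam)^[l] a) m n

/-- The coefficientwise product `c(w)·d(z,w)` of `c(w) ∈ U[[w^{±1}]]` with a ℂ-valued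
two-variable distribution `d`; for `d` a derivative of a delta function each bidegree receives
a single term, so the `finsum` is a genuinely finite sum. -/
def mulCoeff {U : Type*} [Ring U] [Algebra ℂ U] (c : ℤ → U) (d : ℤ → ℤ → ℂ) : ℤ → ℤ → U :=
  fun m q => ∑ᶠ j : ℤ, d m j • c (q - j)

private lemma smul_cancel₀ {U : Type*} [AddCommGroup U] [Module ℂ U]
    {c : ℂ} (hc : c ≠ 0) {u : U} (h : c • u = 0) : u = 0 := by
  have := congrArg (fun x => c⁻¹ • x) h
  simpa [smul_smul, inv_mul_cancel₀ hc] using this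

private lemma shift_sum {U : Type*} [AddCommGroup U] [Module ℂ U]
    (n : ℕ) (a : ℕ → U) (x : ℂ) :
    ∑ j ∈ Finset.range n, (x + 1) ^ j • a j
      = ∑ t ∈ Finset.range n, x ^ t • ∑ i ∈ Finset.range n, ((i.choose t : ℂ)) • a i := by
  have key : ∀ j ∈ Finset.range n,
      (x + 1) ^ j • a j = ∑ t ∈ Finset.range n, x ^ t • ((j.choose t : ℂ) • a j) := by
    intro j hj
    have h1 : (x + 1) ^ j = ∑ t ∈ Finset.range n, x ^ t * (j.choose t : ℂ) := by
      have h0 : (x + 1) ^ j = ∑ t ∈ Finset.range (j + 1), x ^ t * (j.choose t : ℂ) := by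
        simpa using add_pow x 1 j
      rw [h0]
      apply Finset.sum_subset
      · exact Finset.range_subset_range.mpr (Finset.mem_range.mp hj)
      · intro t _ hnt
        rw [Nat.choose_eq_zero_of_lt (by simp only [Finset.mem_range, not_lt] at hnt; omega)]
        simp
    rw [h1, Finset.sum_smul]
    exact Finset.sum_congr rfl fun t _ => by rw [mul_smul]
  rw [Finset.sum_congr rfl key, Finset.sum_comm]
  exact Finset.sum_congr rfl fun t _ => (Finset.smul_sum).symm

private lemma poly_sum {U : Type*} [AddCommGroup U] [Module ℂ U]
    (n : ℕ) (P : ℕ → Polynomial ℂ) (hPd : ∀ l, (P l).natDegree = l)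
    (v : ℕ → U) (x : ℂ) :
    ∑ l ∈ Finset.range n, (P l).eval x • v l
      = ∑ j ∈ Finset.range n, x ^ j • ∑ l ∈ Finset.range n, ((P l).coeff j) • v l := by
  have key : ∀ l ∈ Finset.range n, (P l).eval x • v l
      = ∑ j ∈ Finset.range n, x ^ j • (((P l).coeff j) • v l) := by
    intro l hl
    rw [Polynomial.eval_eq_sum_range' (lt_of_le_of_lt (le_of_eq (hPd l)) (Finset.mem_range.mp hl)) x,
      Finset.sum_smul]
    exact Finset.sum_congr rfl fun j _ => by rw [mul_comm, mul_smul]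
  rw [Finset.sum_congr rfl key, Finset.sum_comm]
  exact Finset.sum_congr rfl fun j _ => (Finset.smul_sum).symm

private lemma core {U : Type*} [AddCommGroup U] [Module ℂ U]
    {N : ℕ} (lam : Fin N → ℂ) (hne : ∀ k, lam k ≠ 0) (hinj : Function.Injective lam) :
    ∀ (M : ℕ) (n : Fin N → ℕ), (∑ k, n k) = M → ∀ (a : Fin N → ℕ → U),
      (∀ s : ℤ, ∑ k, lam k ^ s • ∑ j ∈ Finset.range (n k), ((s : ℂ)) ^ j • a k j = 0) →
      ∀ k, ∀ j, j < n k → a k j = 0 := by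
  intro M
  induction M with
  | zero =>
    intro n hn a _ k j hj
    have : n k = 0 := Finset.sum_eq_zero_iff.mp hn k (Finset.mem_univ k)
    omega
  | succ M ih =>
    intro n hn a h
    have hex : ∃ k0, 0 < n k0 := by
      by_contra hc
      push_neg at hc
      have : ∑ k, n k = 0 := Finset.sum_eq_zero (fun k _ => Nat.le_zero.mp (hc k))
      omega
    obtain ⟨k0, hk0⟩ := hex
    set n' : Fin N → ℕ := Function.update n k0 (n k0 - 1) with hn'def
    have hn'k0 : n' k0 = n k0 - 1 := Function.update_self _ _ _
    have hn'ne : ∀ k, k ≠ k0 → n' k = n k := fun k hk => Function.update_of_ne hk _ _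
    have hn' : ∑ k, n' k = M := by
      have e1 : ∑ k, n' k = n k0 - 1 + ∑ k ∈ Finset.univ \ {k0}, n k :=
        Finset.sum_update_of_mem (Finset.mem_univ k0) n (n k0 - 1)
      have e2 : ∑ k, n k = (∑ k ∈ Finset.univ \ {k0}, n k) + n k0 :=
        (Finset.sum_eq_sum_sdiff_singleton_add (Finset.mem_univ k0) n)
      omega
    set b : Fin N → ℕ → U := fun k j =>
      lam k • (∑ i ∈ Finset.range (n k), ((i.choose j : ℂ)) • a k i) - lam k0 • a k j with hbdef
    have hbtop : b k0 (n k0 - 1) = 0 := by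
      have hs : ∑ i ∈ Finset.range (n k0), ((i.choose (n k0 - 1) : ℂ)) • a k0 i
          = a k0 (n k0 - 1) := by
        rw [Finset.sum_eq_single_of_mem (n k0 - 1) (Finset.mem_range.mpr (by omega))]
        · simp
        · intro i hi hne'
          have : i < n k0 - 1 := by
            have := Finset.mem_range.mp hi; omega
          rw [Nat.choose_eq_zero_of_lt this]
          simp
      simp only [hbdef, hs, sub_self]
    have hG : ∀ s : ℤ, ∑ k, lam k ^ s • ∑ j ∈ Finset.range (n' k), ((s : ℂ)) ^ j • b k j = 0 := by
      intro s
      have e1 := h (s + 1)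
      have e2 := h s
      have e3 : ∑ k, (lam k ^ (s + 1) • ∑ j ∈ Finset.range (n k), (((s + 1 : ℤ)) : ℂ) ^ j • a k j
            - lam k0 • (lam k ^ s • ∑ j ∈ Finset.range (n k), ((s : ℂ)) ^ j • a k j)) = 0 := by
        rw [Finset.sum_sub_distrib, e1, ← Finset.smul_sum, e2]
        simp
      rw [← e3]
      apply Finset.sum_congr rfl
      intro k _
      have hz : lam k ^ (s + 1) = lam k ^ s * lam k := by
        rw [zpow_add_one₀ (hne k)]
      have hcast : (((s + 1 : ℤ)) : ℂ) = (s : ℂ) + 1 := by push_cast; ring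
      rw [hz, hcast, mul_smul, shift_sum (n k) (a k) (s : ℂ),
        smul_comm (lam k0) (lam k ^ s), ← smul_sub]
      congr 1
      rw [Finset.smul_sum, Finset.smul_sum, ← Finset.sum_sub_distrib]
      have hterm : ∀ j ∈ Finset.range (n k),
          (lam k • ((s:ℂ) ^ j • ∑ i ∈ Finset.range (n k), ((i.choose j : ℂ)) • a k i)
            - lam k0 • ((s:ℂ) ^ j • a k j)) = (s:ℂ) ^ j • b k j := by
        intro j _
        simp only [hbdef, smul_sub]
        rw [smul_comm (lam k) ((s:ℂ)^j), smul_comm (lam k0) ((s:ℂ)^j)]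
      rw [Finset.sum_congr rfl hterm]
      by_cases hk : k = k0
      · subst hk
        have e : n k = n' k + 1 := by omega
        rw [e, Finset.sum_range_succ, hn'k0, hbtop, smul_zero, add_zero]
      · rw [hn'ne k hk]
    have hb0 := ih n' hn' b hG
    have hane : ∀ k, k ≠ k0 → ∀ t, ∀ j, j < n k → n k - j ≤ t → a k j = 0 := by
      intro k hk t
      induction t with
      | zero => intro j hj hle; omega
      | succ t iht =>
        intro j hj hle
        have hbkj : b k j = 0 := hb0 k j (by rw [hn'ne k hk]; exact hj)
        have hs : ∑ i ∈ Finset.range (n k), ((i.choose j : ℂ)) • a k i = a k j := by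
          rw [Finset.sum_eq_single_of_mem j (Finset.mem_range.mpr hj)]
          · simp
          · intro i hi hne'
            rcases lt_or_gt_of_ne hne' with hlt | hgt
            · rw [Nat.choose_eq_zero_of_lt hlt]; simp
            · rw [iht i (Finset.mem_range.mp hi) (by omega)]; simp
        rw [hbdef] at hbkj
        simp only [hs] at hbkj
        have : (lam k - lam k0) • a k j = 0 := by
          rw [sub_smul]; exact hbkj
        exact smul_cancel₀ (sub_ne_zero.mpr (fun he => hk (hinj he))) this
    have hak0 : ∀ t, ∀ j, 0 < j → j < n k0 → n k0 - j ≤ t → a k0 j = 0 := by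
      intro t
      induction t with
      | zero => intro j hj0 hj hle; omega
      | succ t iht =>
        intro j hj0 hj hle
        by_cases hcase : n k0 - j ≤ t
        · exact iht j hj0 hj hcase
        have hbkj : b k0 (j - 1) = 0 := hb0 k0 (j - 1) (by rw [hn'k0]; omega)
        have hsub : ({j - 1, j} : Finset ℕ) ⊆ Finset.range (n k0) := by
          intro x hx
          simp only [Finset.mem_insert, Finset.mem_singleton] at hx
          rcases hx with h1 | h1 <;> (subst h1; exact Finset.mem_range.mpr (by omega))
        have hzero : ∀ i ∈ Finset.range (n k0), i ∉ ({j - 1, j} : Finset ℕ) →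
            ((i.choose (j-1) : ℂ)) • a k0 i = 0 := by
          intro i hi hnot
          simp only [Finset.mem_insert, Finset.mem_singleton] at hnot
          push_neg at hnot
          rcases Nat.lt_or_ge i (j - 1) with hlt | hge
          · rw [Nat.choose_eq_zero_of_lt hlt]; simp
          · have hgt : j < i := by omega
            rw [iht i (by omega) (Finset.mem_range.mp hi) (by omega)]; simp
        have hcj : (j.choose (j - 1)) = j := by
          obtain ⟨j', rfl⟩ := Nat.exists_eq_succ_of_ne_zero (by omega : j ≠ 0)
          simpa using Nat.choose_succ_self_right j'
        have hs : ∑ i ∈ Finset.range (n k0), ((i.choose (j-1) : ℂ)) • a k0 i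
            = a k0 (j - 1) + (j : ℂ) • a k0 j := by
          rw [← Finset.sum_subset hsub hzero, Finset.sum_pair (by omega : j - 1 ≠ j),
            Nat.choose_self, hcj]
          simp
        rw [hbdef] at hbkj
        simp only [hs, smul_add] at hbkj
        rw [add_sub_cancel_left] at hbkj
        exact smul_cancel₀ (by exact_mod_cast (by omega : j ≠ 0) : (j:ℂ) ≠ 0)
          (smul_cancel₀ (hne k0) hbkj)
    have ha0 : a k0 0 = 0 := by
      have h0 := h 0
      have hterm : ∀ k ∈ (Finset.univ : Finset (Fin N)),
          lam k ^ (0:ℤ) • ∑ j ∈ Finset.range (n k), (((0:ℤ)) : ℂ) ^ j • a k j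
            = if k = k0 then a k0 0 else 0 := by
        intro k _
        by_cases hk : k = k0
        · subst hk
          rw [if_pos rfl, zpow_zero, one_smul]
          rw [Finset.sum_eq_single_of_mem 0 (Finset.mem_range.mpr hk0)]
          · simp
          · intro j hj hj0
            rw [show (((0:ℤ)):ℂ) = 0 by simp, zero_pow hj0, zero_smul]
        · rw [if_neg hk, zpow_zero, one_smul]
          apply Finset.sum_eq_zero
          intro j hj
          rw [hane k hk (n k) j (Finset.mem_range.mp hj) (by omega)]
          simp
      rw [Finset.sum_congr rfl hterm] at h0
      simpa using h0
    intro k j hj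
    by_cases hk : k = k0
    · subst hk
      rcases Nat.eq_zero_or_pos j with hj0 | hjpos
      · subst hj0; exact ha0
      · exact hak0 (n k) j hjpos hj (by omega)
    · exact hane k hk (n k) j hj (by omega)

private lemma iter_formula_s3 (lam : ℂ) (l : ℕ) (m : ℤ) : ∀ q : ℤ,
    (derivLWC lam)^[l] (fdeltaC lam) m q
      = if q = -m - 1 - l then
          lam⁻¹ ^ l * (∏ j ∈ Finset.range l, ((-m - 1 - (j:ℤ) : ℤ) : ℂ)) * lam ^ (-m - 1 : ℤ)
        else 0 := by
  induction l with
  | zero =>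
    intro q
    simp [fdeltaC]
  | succ l ih =>
    intro q
    rw [Function.iterate_succ_apply']
    simp only [derivLWC, derivWC]
    rw [ih (q + 1)]
    by_cases hq : q = -m - 1 - ((l:ℤ) + 1)
    · rw [if_pos (by omega), if_pos (by omega)]
      rw [show ((q + 1 : ℤ) : ℂ) = ((-m - 1 - (l:ℤ) : ℤ) : ℂ) by rw [show q + 1 = -m-1-(l:ℤ) by omega]]
      rw [Finset.prod_range_succ]
      ring
    · rw [if_neg (by omega), if_neg (by omega)]
      ring

private lemma mulCoeff_eval {U : Type*} [Ring U] [Algebra ℂ U] (c : ℤ → U) (lam : ℂ)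
    (l : ℕ) (m q : ℤ) :
    mulCoeff c (divPowDerivLWC lam l (fdeltaC lam)) m q
      = ((l.factorial : ℂ)⁻¹ * (lam⁻¹ ^ l * (∏ j ∈ Finset.range l, ((-m - 1 - (j:ℤ) : ℤ) : ℂ))
          * lam ^ (-m - 1 : ℤ))) • c (q + m + 1 + l) := by
  unfold mulCoeff divPowDerivLWC
  rw [finsum_eq_single _ (-m - 1 - (l:ℤ))
    (by
      intro j hj
      rw [iter_formula_s3, if_neg hj, mul_zero, zero_smul])]
  rw [iter_formula_s3, if_pos rfl]
  rw [show q - (-m - 1 - (l:ℤ)) = q + m + 1 + l by omega]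

/-- Linear independence of the (divided derivatives of) delta functions: if
`Σ_{k=1}^{N} Σ_{l=0}^{n_k−1} c_{kl}(w) ∂^{(l)}_{λ_k w}δ(z−λ_k w) = 0` with `λ₁,…,λ_N` distinct
and nonzero, then all `c_{kl}(w) = 0`. -/
theorem delta_linear_independence {U : Type*} [Ring U] [Algebra ℂ U]
    (N : ℕ) (lam : Fin N → ℂ) (hne : ∀ k, lam k ≠ 0) (hinj : Function.Injective lam)
    (n : Fin N → ℕ) (hn : ∀ k, 0 < n k)
    (c : Fin N → ℕ → (ℤ → U))
    (h : ∑ k : Fin N, ∑ l ∈ Finset.range (n k),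
        mulCoeff (c k l) (divPowDerivLWC (lam k) l (fdeltaC (lam k))) = 0) :
    ∀ k : Fin N, ∀ l : ℕ, l < n k → c k l = 0 := by
  classical
  have hco : ∀ m q : ℤ, ∑ k : Fin N, ∑ l ∈ Finset.range (n k),
      ((l.factorial : ℂ)⁻¹ * ((lam k)⁻¹ ^ l * (∏ j ∈ Finset.range l, ((-m - 1 - (j:ℤ) : ℤ) : ℂ))
        * (lam k) ^ (-m - 1 : ℤ))) • c k l (q + m + 1 + l) = 0 := by
    intro m q
    have h0 : (∑ k : Fin N, ∑ l ∈ Finset.range (n k),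
        mulCoeff (c k l) (divPowDerivLWC (lam k) l (fdeltaC (lam k)))) m q = 0 := by
      rw [h]; rfl
    simp only [Finset.sum_apply, mulCoeff_eval] at h0
    exact h0
  set P : ℕ → Polynomial ℂ := fun l => ∏ i ∈ Finset.range l, (Polynomial.X - Polynomial.C (i:ℂ))
    with hPdef
  have hPm : ∀ l, (P l).Monic := fun l =>
    Polynomial.monic_prod_of_monic _ _ (fun i _ => Polynomial.monic_X_sub_C _)
  have hPd : ∀ l, (P l).natDegree = l := by
    intro l
    rw [hPdef]
    rw [Polynomial.natDegree_prod_of_monic _ _ (fun i _ => Polynomial.monic_X_sub_C _)]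
    rw [Finset.sum_congr rfl (fun (x : ℕ) _ => Polynomial.natDegree_X_sub_C ((x:ℂ)))]
    simp
  have hPe : ∀ (l : ℕ) (s : ℤ), (P l).eval ((s:ℂ))
      = ∏ j ∈ Finset.range l, ((s - (j:ℤ) : ℤ) : ℂ) := by
    intro l s
    rw [hPdef]
    rw [Polynomial.eval_prod]
    apply Finset.prod_congr rfl
    intro i _
    simp only [Polynomial.eval_sub, Polynomial.eval_X, Polynomial.eval_C]
    push_cast
    ring
  have key : ∀ p : ℤ, ∀ k, ∀ l, l < n k → c k l (p + l) = 0 := by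
    intro p
    set v : Fin N → ℕ → U := fun k l =>
      ((l.factorial : ℂ)⁻¹ * (lam k)⁻¹ ^ l) • c k l (p + l) with hvdef
    set a : Fin N → ℕ → U := fun k j =>
      ∑ l ∈ Finset.range (n k), ((P l).coeff j) • v k l with hadef
    have hsum : ∀ s : ℤ, ∑ k, lam k ^ s • ∑ j ∈ Finset.range (n k), ((s : ℂ)) ^ j • a k j = 0 := by
      intro s
      have h0 := hco (-s - 1) (p + s)
      have harg : ∀ l : ℕ, p + s + (-s - 1) + 1 + (l:ℤ) = p + (l:ℤ) := by intro l; ring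
      have hexp : (-(-s - 1) - 1 : ℤ) = s := by ring
      simp only [hexp, harg] at h0
      rw [← h0]
      apply Finset.sum_congr rfl
      intro k _
      simp only [hadef]
      rw [← poly_sum (n k) P hPd (v k) ((s:ℂ)), Finset.smul_sum]
      apply Finset.sum_congr rfl
      intro l hl
      rw [hPe l s]
      simp only [hvdef]
      rw [smul_smul, smul_smul]
      congr 1
      ring
    have hA := core lam hne hinj (∑ k, n k) n rfl a hsum
    have hV : ∀ t, ∀ k, ∀ l, l < n k → n k - l ≤ t → v k l = 0 := by
      intro t
      induction t with
      | zero => intro k l hl hle; omega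
      | succ t iht =>
        intro k l hl hle
        have h1 : a k l = 0 := hA k l hl
        simp only [hadef] at h1
        have h2 : ∑ l' ∈ Finset.range (n k), ((P l').coeff l) • v k l' = v k l := by
          rw [Finset.sum_eq_single_of_mem l (Finset.mem_range.mpr hl)]
          · rw [show (P l).coeff l = 1 from by
                have := (hPm l).coeff_natDegree
                rwa [hPd l] at this,
              one_smul]
          · intro l' hl' hne'
            rcases lt_or_gt_of_ne hne' with hlt | hgt
            · rw [Polynomial.coeff_eq_zero_of_natDegree_lt (by rw [hPd]; exact hlt), zero_smul]
            · rw [iht k l' (Finset.mem_range.mp hl') (by omega), smul_zero]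
        rw [h2] at h1
        exact h1
    intro k l hl
    have hv0 := hV (n k) k l hl (by omega)
    simp only [hvdef] at hv0
    refine smul_cancel₀ ?_ hv0
    apply mul_ne_zero
    · exact inv_ne_zero (by exact_mod_cast l.factorial_ne_zero)
    · exact pow_ne_zero _ (inv_ne_zero (hne k))
  intro k l hl
  funext p'
  have := key (p' - l) k l hl
  simpa using this

end
end

section
/- (Delta-function decomposition of N-point local distributions) Let U be a unital associative ℂ-algebra, λ₁,…,λ_N distinct nonzero complex numbers, n₁,…,n_N positive integers, and a(z,w) ∈ U[[z^{±1},w^{±1}]]. Then (z−λ₁w)^{n₁}(z−λ₂w)^{n₂}⋯(z−λ_N w)^{n_N}·a(z,w) = 0 if and only if there exist c_{kl}(w) ∈ U[[w^{±1}]] (1 ≤ k ≤ N, 0 ≤ l ≤ n_k−1) such that a(z,w) = Σ_{k=1}^{N} Σ_{l=0}^{n_k−1} c_{kl}(w) ∂^{(l)}_{λ_k w}δ(z−λ_k w). Moreover, when this holds the coefficients c_{kl}(w) are uniquely determined by a(z,w). -/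
/- One-variable formal distributions `c(w) ∈ U[[w^{±1}]]` are encoded as `ℤ → U`;
two-variable distributions in `U[[z^{±1},w^{±1}]]` as `ℤ → ℤ → U`. -/

noncomputable section

/-- Multiplication by `(z−λ₁w)^{n₁}⋯(z−λ_Nw)^{n_N}`, coefficientwise. -/
def mulLocality {M : Type*} [AddCommGroup M] [Module ℂ M] {N : ℕ}
    (lam : Fin N → ℂ) (n : Fin N → ℕ) (a : ℤ → ℤ → M) : ℤ → ℤ → M :=
  (List.finRange N).foldr (fun k acc => (mulZsubLW (lam k))^[n k] acc) a

namespace NPointAux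

variable {M : Type*} [AddCommGroup M] [Module ℂ M]

/-- The one-variable operator `f(m) ↦ f(m-1) - λ f(m)`. -/
def SL (lam : ℂ) (f : ℤ → M) : ℤ → M := fun m => f (m-1) - lam • f m

/-- Basis exponential-polynomial functions. -/
def B (lam : ℂ) (l : ℕ) (m : ℤ) : ℂ :=
  (l.factorial : ℂ)⁻¹ * (-1)^l * lam ^ (-m-1-(l:ℤ)) * ∏ i ∈ Finset.range l, ((m:ℂ) + i + 1)

lemma B_zero (lam : ℂ) (m : ℤ) : B lam 0 m = lam ^ (-m-1) := by simp [B]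

lemma SL_zero (lam : ℂ) : SL lam (0 : ℤ → M) = 0 := by
  funext m; simp [SL]

lemma SL_add (lam : ℂ) (f g : ℤ → M) : SL lam (f + g) = SL lam f + SL lam g := by
  funext m; simp [SL, smul_add]; abel

lemma SL_sub (lam : ℂ) (f g : ℤ → M) : SL lam (f - g) = SL lam f - SL lam g := by
  funext m; simp [SL, smul_sub]; abel

lemma SL_iter_zero (lam : ℂ) (p : ℕ) : (SL (M := M) lam)^[p] 0 = 0 := by
  induction p with
  | zero => rfl
  | succ p ih => rw [Function.iterate_succ_apply, SL_zero, ih]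

lemma SL_iter_add (lam : ℂ) (p : ℕ) (f g : ℤ → M) :
    (SL lam)^[p] (f + g) = (SL lam)^[p] f + (SL lam)^[p] g := by
  induction p generalizing f g with
  | zero => rfl
  | succ p ih => rw [Function.iterate_succ_apply, Function.iterate_succ_apply,
      Function.iterate_succ_apply, SL_add, ih]

lemma SL_iter_sub (lam : ℂ) (p : ℕ) (f g : ℤ → M) :
    (SL lam)^[p] (f - g) = (SL lam)^[p] f - (SL lam)^[p] g := by
  induction p generalizing f g with
  | zero => rfl
  | succ p ih => rw [Function.iterate_succ_apply, Function.iterate_succ_apply,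
      Function.iterate_succ_apply, SL_sub, ih]

lemma SL_smul_fun (lam : ℂ) (g : ℤ → ℂ) (u : M) :
    SL lam (fun m => g m • u) = fun m => (SL lam g) m • u := by
  funext m
  simp [SL, sub_smul, smul_smul]

lemma SL_comm (a b : ℂ) : Function.Commute (SL (M := M) a) (SL b) := by
  intro f
  funext m
  simp only [Function.comp_apply, SL, smul_sub, smul_smul, mul_comm]
  abel

/-- `SL μ f = SL λ f + (λ - μ) • f`. -/
lemma SL_eq (mu lam : ℂ) (f : ℤ → M) :
    SL mu f = fun m => SL lam f m + (lam - mu) • f m := by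
  funext m
  simp only [SL, sub_smul]
  abel

lemma P_shift (l : ℕ) (m : ℤ) :
    ∏ i ∈ Finset.range (l+1), ((m:ℂ) - 1 + i + 1)
      = ∏ i ∈ Finset.range (l+1), ((m:ℂ) + i + 1)
        - ((l:ℂ)+1) * ∏ i ∈ Finset.range l, ((m:ℂ) + i + 1) := by
  rw [Finset.prod_range_succ' (fun i => (m:ℂ) - 1 + i + 1) l, Finset.prod_range_succ]
  have h : ∀ i ∈ Finset.range l, (m:ℂ) - 1 + (↑(i+1)) + 1 = (m:ℂ) + i + 1 := fun i _ => by
    push_cast; ring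
  rw [Finset.prod_congr rfl h]
  push_cast
  ring

lemma SL_B_zero {lam : ℂ} (h : lam ≠ 0) : SL lam (B lam 0) = 0 := by
  funext m
  simp only [SL, B_zero, smul_eq_mul, Pi.zero_apply]
  rw [show (-(m-1)-1) = (-m-1) + 1 from by ring, zpow_add_one₀ h]
  ring

lemma SL_B_succ {lam : ℂ} (h : lam ≠ 0) (l : ℕ) : SL lam (B lam (l+1)) = B lam l := by
  funext m
  have hfac : ((l.factorial : ℕ) : ℂ) ≠ 0 := Nat.cast_ne_zero.mpr (Nat.factorial_ne_zero l)
  have hl1 : ((l:ℂ) + 1) ≠ 0 := Nat.cast_add_one_ne_zero l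
  simp only [SL, B, smul_eq_mul, Nat.factorial_succ]
  push_cast
  rw [show (-(m-1)-1-((l:ℤ)+1)) = (-m-1-(l:ℤ)) from by ring,
      show (-m-1-((l:ℤ)+1)) = (-m-1-(l:ℤ)) - 1 from by ring,
      zpow_sub_one₀ h, P_shift l m]
  field_simp
  ring

/-- Module-valued basis element `m ↦ B λ l m • u`. -/
def bu (lam : ℂ) (l : ℕ) (u : M) : ℤ → M := fun m => B lam l m • u

lemma SL_bu_zero {lam : ℂ} (h : lam ≠ 0) (u : M) : SL lam (bu lam 0 u) = 0 := by
  show SL lam (fun m => B lam 0 m • u) = 0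
  rw [SL_smul_fun, SL_B_zero h]
  funext m; simp

lemma SL_bu_succ {lam : ℂ} (h : lam ≠ 0) (l : ℕ) (u : M) :
    SL lam (bu lam (l+1) u) = bu lam l u := by
  show SL lam (fun m => B lam (l+1) m • u) = bu lam l u
  rw [SL_smul_fun, SL_B_succ h]
  rfl

/-- `bu lam (l-1) u`, with the convention that it is `0` for `l = 0`. -/
def buPred (lam : ℂ) : ℕ → M → ℤ → M
  | 0, _ => 0
  | (l+1), u => bu lam l u

lemma SL_bu {lam : ℂ} (h : lam ≠ 0) (mu : ℂ) (l : ℕ) (u : M) :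
    SL mu (bu lam l u) = buPred lam l u + (lam - mu) • bu lam l u := by
  rw [SL_eq mu lam]
  cases l with
  | zero => rw [show SL lam (bu lam 0 u) = 0 from SL_bu_zero h u]; rfl
  | succ l' => rw [SL_bu_succ h l']; rfl


lemma smul_bu (lam : ℂ) (c : ℂ) (l : ℕ) (u : M) :
    c • bu lam l u = bu lam l (c • u) := by
  funext m
  simp [bu, smul_comm c]

lemma SL_smulC (mu c : ℂ) (f : ℤ → M) : SL mu (c • f) = c • SL mu f := by
  funext m
  simp [SL, smul_sub, smul_comm c]

lemma SL_iter_smulC (mu c : ℂ) (p : ℕ) (f : ℤ → M) :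
    (SL mu)^[p] (c • f) = c • (SL mu)^[p] f := by
  induction p generalizing f with
  | zero => rfl
  | succ p ih => rw [Function.iterate_succ_apply, Function.iterate_succ_apply, SL_smulC, ih]

lemma SL_sum {ι : Type*} (lam : ℂ) (s : Finset ι) (F : ι → ℤ → M) :
    SL lam (∑ i ∈ s, F i) = ∑ i ∈ s, SL lam (F i) := by
  funext m
  simp [SL, Finset.sum_apply, Finset.smul_sum, Finset.sum_sub_distrib]

lemma SL_iter_sum {ι : Type*} (lam : ℂ) (p : ℕ) (s : Finset ι) (F : ι → ℤ → M) :
    (SL lam)^[p] (∑ i ∈ s, F i) = ∑ i ∈ s, (SL lam)^[p] (F i) := by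
  induction p generalizing F with
  | zero => rfl
  | succ p ih =>
      rw [Function.iterate_succ_apply, SL_sum, ih]
      exact Finset.sum_congr rfl fun i _ => (Function.iterate_succ_apply (SL lam) p (F i)).symm

lemma sum_bu (lam : ℂ) (p : ℕ) (v : ℕ → M) :
    (∑ l ∈ Finset.range p, bu lam l (v l)) = fun m => ∑ l ∈ Finset.range p, B lam l m • v l := by
  funext m
  simp [bu, Finset.sum_apply]

/-- Membership in the span of `B lam l'`, `l' < p`, with module coefficients. -/
def InW (lam : ℂ) (p : ℕ) (f : ℤ → M) : Prop :=
  ∃ v : ℕ → M, f = fun m => ∑ l ∈ Finset.range p, B lam l m • v l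

lemma InW_zero (lam : ℂ) (p : ℕ) : InW lam p (0 : ℤ → M) :=
  ⟨0, by funext m; simp⟩

lemma InW_single (lam : ℂ) {p l : ℕ} (h : l < p) (u : M) : InW lam p (bu lam l u) := by
  classical
  refine ⟨fun l' => if l' = l then u else 0, ?_⟩
  funext m
  show B lam l m • u = _
  rw [Finset.sum_congr rfl (fun l' _ => by rw [smul_ite, smul_zero]),
    Finset.sum_ite_eq' (Finset.range p) l (fun l' => B lam l' m • u),
    if_pos (Finset.mem_range.mpr h)]

lemma buPred_InW {lam : ℂ} (l : ℕ) (u : M) : InW lam l (buPred lam l u) := by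
  cases l with
  | zero => exact InW_zero lam 0
  | succ l' => exact InW_single lam (Nat.lt_succ_self l') u

lemma InW_add {lam : ℂ} {p : ℕ} {f g : ℤ → M} (hf : InW lam p f) (hg : InW lam p g) :
    InW lam p (f + g) := by
  obtain ⟨v, rfl⟩ := hf
  obtain ⟨v', rfl⟩ := hg
  exact ⟨v + v', by funext m; simp [smul_add, Finset.sum_add_distrib]⟩

lemma InW_smul {lam : ℂ} {p : ℕ} {f : ℤ → M} (c : ℂ) (hf : InW lam p f) :
    InW lam p (c • f) := by
  obtain ⟨v, rfl⟩ := hf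
  refine ⟨fun l => c • v l, ?_⟩
  funext m
  simp [Finset.smul_sum, smul_comm c]

lemma InW_sum {ι : Type*} {lam : ℂ} {p : ℕ} {s : Finset ι} {F : ι → ℤ → M}
    (h : ∀ i ∈ s, InW lam p (F i)) : InW lam p (∑ i ∈ s, F i) := by
  classical
  induction s using Finset.induction_on with
  | empty => simpa using InW_zero lam p
  | insert j s hni ih =>
      rw [Finset.sum_insert hni]
      exact InW_add (h j (Finset.mem_insert_self j s))
        (ih fun i hi => h i (Finset.mem_insert_of_mem hi))

lemma InW_mono {lam : ℂ} {p p' : ℕ} (hpp : p ≤ p') {f : ℤ → M} (hf : InW lam p f) :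
    InW lam p' f := by
  classical
  obtain ⟨v, rfl⟩ := hf
  refine ⟨fun l => if l < p then v l else 0, ?_⟩
  funext m
  rw [← Finset.sum_subset (Finset.range_subset_range.mpr hpp)
    (fun l _ hl => by simp only []; rw [if_neg (by simpa using hl), smul_zero])]
  exact Finset.sum_congr rfl fun l hl => by
    simp only []; rw [if_pos (Finset.mem_range.mp hl)]

lemma SL_self_sum {lam : ℂ} (h : lam ≠ 0) (p : ℕ) (v : ℕ → M) :
    SL lam (fun m => ∑ l ∈ Finset.range (p+1), B lam l m • v l)
      = fun m => ∑ l ∈ Finset.range p, B lam l m • v (l+1) := by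
  rw [← sum_bu, SL_sum, Finset.sum_range_succ' (fun l => SL lam (bu lam l (v l))) p,
    SL_bu_zero h, add_zero,
    Finset.sum_congr rfl (fun l _ => SL_bu_succ h l (v (l+1))), sum_bu]

lemma SL_InW {lam : ℂ} (h : lam ≠ 0) (mu : ℂ) {p : ℕ} {f : ℤ → M} (hf : InW lam p f) :
    InW lam p (SL mu f) := by
  have hself : InW lam p (SL lam f) := by
    obtain ⟨v, rfl⟩ := hf
    cases p with
    | zero =>
        have : (fun m => ∑ l ∈ Finset.range 0, B lam l m • v l) = (0 : ℤ → M) := by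
          funext m; simp
        rw [this, SL_zero]; exact InW_zero lam 0
    | succ p =>
        rw [SL_self_sum h]
        exact InW_mono (Nat.le_succ p) ⟨fun l => v (l+1), rfl⟩
  rw [SL_eq mu lam]
  have : (fun m => SL lam f m + (lam - mu) • f m) = SL lam f + (lam - mu) • f := by
    funext m; simp
  rw [this]
  exact InW_add hself (InW_smul _ hf)

lemma SL_iter_InW {lam : ℂ} (h : lam ≠ 0) (mu : ℂ) {p q : ℕ} {f : ℤ → M}
    (hf : InW lam p f) : InW lam p ((SL mu)^[q] f) := by
  induction q generalizing f with
  | zero => exact hf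
  | succ q ih => rw [Function.iterate_succ_apply]; exact ih (SL_InW h mu hf)

lemma KILLW {lam : ℂ} (h : lam ≠ 0) {p : ℕ} {f : ℤ → M} (hf : InW lam p f) :
    (SL lam)^[p] f = 0 := by
  induction p generalizing f with
  | zero =>
      obtain ⟨v, rfl⟩ := hf
      funext m; simp
  | succ p ih =>
      obtain ⟨v, rfl⟩ := hf
      rw [Function.iterate_succ_apply, SL_self_sum h]
      exact ih ⟨fun l => v (l+1), rfl⟩

lemma bu_iter {lam : ℂ} (h : lam ≠ 0) (r : ℕ) (u : M) :
    (SL lam)^[r] (bu lam r u) = bu lam 0 u := by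
  induction r with
  | zero => rfl
  | succ r ih => rw [Function.iterate_succ_apply, SL_bu_succ h, ih]

variable {N : ℕ}

/-- Composite operator defined by a list of factors. -/
def PLl (lam : Fin N → ℂ) (L : List (Fin N)) (n : Fin N → ℕ) (f : ℤ → M) : ℤ → M :=
  L.foldr (fun k g => (SL (lam k))^[n k] g) f

lemma PLl_nil (lam : Fin N → ℂ) (n : Fin N → ℕ) (f : ℤ → M) : PLl lam [] n f = f := rfl

lemma PLl_cons (lam : Fin N → ℂ) (k : Fin N) (L : List (Fin N)) (n : Fin N → ℕ) (f : ℤ → M) :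
    PLl lam (k :: L) n f = (SL (lam k))^[n k] (PLl lam L n f) := rfl

lemma PLl_zero (lam : Fin N → ℂ) (L : List (Fin N)) (n : Fin N → ℕ) :
    PLl lam L n (0 : ℤ → M) = 0 := by
  induction L with
  | nil => rfl
  | cons k L ih => rw [PLl_cons, ih, SL_iter_zero]

lemma PLl_sub (lam : Fin N → ℂ) (L : List (Fin N)) (n : Fin N → ℕ) (f g : ℤ → M) :
    PLl lam L n (f - g) = PLl lam L n f - PLl lam L n g := by
  induction L generalizing f g with
  | nil => rfl
  | cons k L ih => rw [PLl_cons, ih, SL_iter_sub, PLl_cons, PLl_cons]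

lemma PLl_smulC (lam : Fin N → ℂ) (L : List (Fin N)) (n : Fin N → ℕ) (c : ℂ) (f : ℤ → M) :
    PLl lam L n (c • f) = c • PLl lam L n f := by
  induction L generalizing f with
  | nil => rfl
  | cons k L ih => rw [PLl_cons, ih, SL_iter_smulC, PLl_cons]

lemma PLl_sum {ι : Type*} (lam : Fin N → ℂ) (L : List (Fin N)) (n : Fin N → ℕ)
    (s : Finset ι) (F : ι → ℤ → M) :
    PLl lam L n (∑ i ∈ s, F i) = ∑ i ∈ s, PLl lam L n (F i) := by
  induction L generalizing F with
  | nil => rfl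
  | cons k L ih =>
      rw [PLl_cons, ih, SL_iter_sum]
      exact Finset.sum_congr rfl fun i _ => (PLl_cons lam k L n (F i)).symm

lemma PLl_congr (lam : Fin N → ℂ) {L : List (Fin N)} {n n' : Fin N → ℕ}
    (h : ∀ j ∈ L, n j = n' j) (f : ℤ → M) : PLl lam L n f = PLl lam L n' f := by
  induction L with
  | nil => rfl
  | cons k L ih =>
      rw [PLl_cons, PLl_cons, ih fun j hj => h j (List.mem_cons_of_mem k hj),
        h k List.mem_cons_self]

lemma PLl_InW {lam : Fin N → ℂ} {lam0 : ℂ} (h0 : lam0 ≠ 0) (L : List (Fin N)) (n : Fin N → ℕ)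
    {p : ℕ} {f : ℤ → M} (hf : InW lam0 p f) : InW lam0 p (PLl lam L n f) := by
  induction L generalizing f with
  | nil => exact hf
  | cons k L ih => exact SL_iter_InW h0 _ (ih hf)

lemma PLl_kill {lam : Fin N → ℂ} {k : Fin N} (h0 : lam k ≠ 0) {L : List (Fin N)}
    (hk : k ∈ L) {n : Fin N → ℕ} {f : ℤ → M} (hf : InW (lam k) (n k) f) :
    PLl lam L n f = 0 := by
  induction L with
  | nil => simp at hk
  | cons j L ih =>
      by_cases hmem : k ∈ L
      · rw [PLl_cons, ih hmem, SL_iter_zero]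
      · have hkj : k = j := by
          rcases List.mem_cons.mp hk with h | h
          · exact h
          · exact absurd h hmem
        subst hkj
        rw [PLl_cons, KILLW h0 (PLl_InW h0 L n hf)]

lemma PLl_peel {lam : Fin N → ℂ} {k : Fin N} {L : List (Fin N)} (hnd : L.Nodup)
    (hk : k ∈ L) {n : Fin N → ℕ} {r : ℕ} (hr : n k = r + 1) (f : ℤ → M) :
    PLl lam L n f = SL (lam k) (PLl lam L (Function.update n k r) f) := by
  classical
  induction L with
  | nil => simp at hk
  | cons j L ih =>
      rcases List.nodup_cons.mp hnd with ⟨hjL, hndL⟩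
      by_cases hkj : k = j
      · subst hkj
        have hnL : PLl lam L n f = PLl lam L (Function.update n k r) f :=
          PLl_congr lam (fun i hi =>
            (Function.update_of_ne (fun hik : i = k => hjL (hik ▸ hi)) r n).symm) f
        rw [PLl_cons, PLl_cons, hr, Function.iterate_succ_apply', hnL, Function.update_self]
      · have hmem : k ∈ L := by
          rcases List.mem_cons.mp hk with h | h
          · exact absurd h hkj
          · exact h
        rw [PLl_cons, ih hndL hmem, PLl_cons, Function.update_of_ne (Ne.symm hkj) r n]
        exact ((SL_comm (lam j) (lam k)).iterate_left (n j)) _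

lemma PLl_peel_all {lam : Fin N → ℂ} {k : Fin N} {L : List (Fin N)} (hnd : L.Nodup)
    (hk : k ∈ L) (f : ℤ → M) :
    ∀ (r : ℕ) (n : Fin N → ℕ), n k = r →
      PLl lam L n f = (SL (lam k))^[r] (PLl lam L (Function.update n k 0) f) := by
  classical
  intro r
  induction r with
  | zero =>
      intro n hn
      rw [show Function.update n k 0 = n from by rw [← hn]; exact Function.update_eq_self k n]
      rfl
  | succ r ih =>
      intro n hn
      rw [PLl_peel hnd hk hn f, ih (Function.update n k r) (Function.update_self k r n),
        Function.update_idem, Function.iterate_succ_apply']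

lemma SL_iter_tri {lam0 : ℂ} (h0 : lam0 ≠ 0) (mu : ℂ) {l : ℕ} (u : M) :
    ∀ (p : ℕ) (c : ℂ) (w : ℤ → M), InW lam0 l w →
      ∃ w', InW lam0 l w' ∧
        (SL mu)^[p] (c • bu lam0 l u + w) = ((lam0 - mu)^p * c) • bu lam0 l u + w' := by
  intro p
  induction p with
  | zero => exact fun c w hw => ⟨w, hw, by rw [pow_zero, one_mul]; rfl⟩
  | succ p ih =>
      intro c w hw
      have step : SL mu (c • bu lam0 l u + w)
          = ((lam0 - mu) * c) • bu lam0 l u + (c • buPred lam0 l u + SL mu w) := by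
        rw [SL_add, SL_smulC, SL_bu h0, smul_add, smul_smul, mul_comm c]
        abel
      have hwmem : InW lam0 l (c • buPred lam0 l u + SL mu w) :=
        InW_add (InW_smul c (buPred_InW l u)) (SL_InW h0 mu hw)
      obtain ⟨w', hw', heq⟩ := ih ((lam0 - mu) * c) _ hwmem
      refine ⟨w', hw', ?_⟩
      rw [Function.iterate_succ_apply, step, heq,
        show (lam0 - mu)^p * ((lam0 - mu) * c) = (lam0 - mu)^(p+1) * c from by ring]

lemma PLl_tri {lam : Fin N → ℂ} {lam0 : ℂ} (h0 : lam0 ≠ 0) (n : Fin N → ℕ) {l : ℕ} (u : M) :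
    ∀ L : List (Fin N), ∃ w, InW lam0 l w ∧
      PLl lam L n (bu lam0 l u)
        = ((L.map fun j => (lam0 - lam j)^(n j)).prod) • bu lam0 l u + w := by
  intro L
  induction L with
  | nil =>
      exact ⟨0, InW_zero lam0 l, by rw [PLl_nil]; simp⟩
  | cons j L ih =>
      obtain ⟨w, hw, heq⟩ := ih
      obtain ⟨w', hw', heq'⟩ := SL_iter_tri h0 (lam j) u (n j)
        ((L.map fun j => (lam0 - lam j)^(n j)).prod) w hw
      refine ⟨w', hw', ?_⟩
      rw [PLl_cons, heq, heq', List.map_cons, List.prod_cons]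

lemma PLl_eval {lam : Fin N → ℂ} {k : Fin N} (h0 : lam k ≠ 0) {L : List (Fin N)}
    (hnd : L.Nodup) (hk : k ∈ L) {n : Fin N → ℕ} {r : ℕ} (hnk : n k = r) (u : M) :
    PLl lam L n (bu (lam k) r u)
      = ((L.map fun j => (lam k - lam j)^(Function.update n k 0 j)).prod) •
          bu (lam k) 0 u := by
  rw [PLl_peel_all hnd hk _ r n hnk]
  obtain ⟨w, hw, heq⟩ := PLl_tri h0 (Function.update n k 0) u L
  rw [heq, SL_iter_add, SL_iter_smulC, KILLW h0 hw, add_zero, bu_iter h0]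

lemma PLl_id_of_zero (lam : Fin N → ℂ) {L : List (Fin N)} {n : Fin N → ℕ}
    (h : ∀ j ∈ L, n j = 0) (f : ℤ → M) : PLl lam L n f = f := by
  induction L with
  | nil => rfl
  | cons k L ih =>
      rw [PLl_cons, h k List.mem_cons_self, ih fun j hj => h j (List.mem_cons_of_mem k hj)]
      rfl

lemma solve_ker {lam : ℂ} (h : lam ≠ 0) {g : ℤ → M} (hg : SL lam g = 0) :
    g = bu lam 0 (lam • g 0) := by
  have hrec : ∀ m : ℤ, g (m-1) = lam • g m := fun m => by
    have := congrFun hg m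
    simpa [SL, sub_eq_zero] using this
  have key : ∀ m : ℤ, g m = lam ^ (-m) • g 0 := by
    intro m
    induction m using Int.induction_on with
    | zero => simp
    | succ i ih =>
        have h1 : g ((i:ℤ)+1-1) = lam • g ((i:ℤ)+1) := hrec ((i:ℤ)+1)
        rw [show ((i:ℤ)+1-1) = (i:ℤ) from by ring] at h1
        have h2 : g ((i:ℤ)+1) = lam⁻¹ • g (i:ℤ) := by
          rw [h1, inv_smul_smul₀ h]
        rw [h2, ih, smul_smul]
        congr 1
        rw [show (-((i:ℤ)+1)) = (-(i:ℤ)) + (-1) from by ring, zpow_add₀ h, zpow_neg_one]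
        ring
    | pred i ih =>
        have h1 : g (-(i:ℤ)-1) = lam • g (-(i:ℤ)) := hrec (-(i:ℤ))
        rw [h1, ih, smul_smul]
        congr 1
        rw [show (-(-(i:ℤ)-1)) = (-(-(i:ℤ))) + 1 from by ring, zpow_add_one₀ h]
        ring
  funext m
  rw [key m]
  show _ = B lam 0 m • (lam • g 0)
  rw [B_zero, smul_smul]
  congr 1
  rw [← zpow_add_one₀ h (-m-1)]
  congr 1
  ring

lemma cK_ne_zero {lam : Fin N → ℂ} (hinj : Function.Injective lam) (k : Fin N)
    (n : Fin N → ℕ) :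
    ((List.finRange N).map fun j => (lam k - lam j)^(Function.update n k 0 j)).prod ≠ 0 := by
  classical
  apply List.prod_ne_zero
  intro h0
  rcases List.mem_map.mp h0 with ⟨j, _, hj⟩
  by_cases hjk : j = k
  · subst hjk
    rw [Function.update_self] at hj
    simp at hj
  · have hsub : lam k - lam j ≠ 0 := sub_ne_zero.mpr fun h => hjk (hinj h).symm
    exact hsub (pow_eq_zero_iff'.mp hj).1

lemma sum_update_lt {n : Fin N → ℕ} {k : Fin N} {r : ℕ} (hr : n k = r + 1) :
    (∑ j, Function.update n k r j) + 1 = ∑ j, n j := by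
  classical
  rw [Finset.sum_update_of_mem (Finset.mem_univ k)]
  rw [← Finset.add_sum_erase Finset.univ n (Finset.mem_univ k), Finset.erase_eq, hr]
  omega

lemma FWD {lam : Fin N → ℂ} (hne : ∀ k, lam k ≠ 0) (hinj : Function.Injective lam) :
    ∀ (s : ℕ) (n : Fin N → ℕ) (f : ℤ → M), (∑ k, n k) = s →
      PLl lam (List.finRange N) n f = 0 →
      ∃ u : Fin N → ℕ → M,
        f = fun m => ∑ k, ∑ l ∈ Finset.range (n k), B (lam k) l m • u k l := by
  classical
  intro s
  induction s using Nat.strong_induction_on with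
  | _ s ih =>
  intro n f hs hf
  by_cases hzero : ∀ k, n k = 0
  · refine ⟨0, ?_⟩
    rw [← PLl_id_of_zero lam (fun j _ => hzero j) f, hf]
    funext m
    simp [hzero]
  · push_neg at hzero
    obtain ⟨k, hk⟩ := hzero
    obtain ⟨r, hr⟩ : ∃ r, n k = r + 1 := ⟨n k - 1, by omega⟩
    set n' := Function.update n k r with hn'
    have hg : SL (lam k) (PLl lam (List.finRange N) n' f) = 0 := by
      rw [← PLl_peel (List.nodup_finRange N) (List.mem_finRange k) hr f, hf]
    set g := PLl lam (List.finRange N) n' f with hgdef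
    have hgform : g = bu (lam k) 0 (lam k • g 0) := solve_ker (hne k) hg
    set c : ℂ := ((List.finRange N).map fun j =>
      (lam k - lam j)^(Function.update n' k 0 j)).prod with hc
    have hcne : c ≠ 0 := by
      rw [hc, hn', Function.update_idem]
      exact cK_ne_zero hinj k n
    set w : M := c⁻¹ • (lam k • g 0) with hw
    have heval : PLl lam (List.finRange N) n' (bu (lam k) r w) = g := by
      rw [PLl_eval (hne k) (List.nodup_finRange N) (List.mem_finRange k)
        (Function.update_self k r n) w, smul_bu, hw, smul_inv_smul₀ hcne, ← hgform]
    have hsub : PLl lam (List.finRange N) n' (f - bu (lam k) r w) = 0 := by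
      rw [PLl_sub, heval, ← hgdef, sub_self]
    have hlt : (∑ j, n' j) < s := by
      have hsu := sum_update_lt (n := n) (k := k) hr
      rw [← hn'] at hsu
      omega
    obtain ⟨u', hu'⟩ := ih (∑ j, n' j) hlt n' (f - bu (lam k) r w) rfl hsub
    refine ⟨fun k' l => if k' = k ∧ l = r then w else u' k' l, ?_⟩
    funext m
    have hterm : ∀ k', (∑ l ∈ Finset.range (n k'),
          B (lam k') l m • (if k' = k ∧ l = r then w else u' k' l))
        = (∑ l ∈ Finset.range (n' k'), B (lam k') l m • u' k' l)
          + (if k' = k then B (lam k) r m • w else 0) := by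
      intro k'
      by_cases hk' : k' = k
      · subst hk'
        rw [if_pos rfl, hr, show n' k' = r from Function.update_self k' r n,
          Finset.sum_range_succ]
        congr 1
        · refine Finset.sum_congr rfl fun l hl => ?_
          rw [if_neg fun hc' => absurd hc'.2 (Nat.ne_of_lt (Finset.mem_range.mp hl))]
        · rw [if_pos ⟨rfl, rfl⟩]
      · rw [if_neg hk', add_zero, show n' k' = n k' from Function.update_of_ne hk' r n]
        exact Finset.sum_congr rfl fun l _ => by rw [if_neg fun hc' => hk' hc'.1]
    rw [Finset.sum_congr rfl fun k' _ => hterm k', Finset.sum_add_distrib,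
      Finset.sum_ite_eq' Finset.univ k (fun _ => B (lam k) r m • w),
      if_pos (Finset.mem_univ k)]
    have this2 : f m - bu (lam k) r w m
        = ∑ k', ∑ l ∈ Finset.range (n' k'), B (lam k') l m • u' k' l := by
      simpa using congrFun hu' m
    rw [← this2]
    show f m = f m - B (lam k) r m • w + B (lam k) r m • w
    abel

lemma sum_fun_eq (lam : Fin N → ℂ) (n : Fin N → ℕ) (u : Fin N → ℕ → M) :
    (fun m => ∑ k, ∑ l ∈ Finset.range (n k), B (lam k) l m • u k l)
      = ∑ k, ∑ l ∈ Finset.range (n k), bu (lam k) l (u k l) := by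
  funext m
  simp [bu, Finset.sum_apply]

lemma INDEP {lam : Fin N → ℂ} (hne : ∀ k, lam k ≠ 0) (hinj : Function.Injective lam) :
    ∀ (s : ℕ) (n : Fin N → ℕ) (u : Fin N → ℕ → M), (∑ k, n k) = s →
      (fun m => ∑ k, ∑ l ∈ Finset.range (n k), B (lam k) l m • u k l) = 0 →
      ∀ k l, l < n k → u k l = 0 := by
  classical
  intro s
  induction s using Nat.strong_induction_on with
  | _ s ih =>
  intro n u hs hzero k l hl
  obtain ⟨r, hr⟩ : ∃ r, n k = r + 1 := ⟨n k - 1, by omega⟩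
  set n' := Function.update n k r with hn'
  have htop : u k r = 0 := by
    have happ : PLl lam (List.finRange N) n'
        (fun m => ∑ k', ∑ l' ∈ Finset.range (n k'), B (lam k') l' m • u k' l') = 0 := by
      rw [hzero, PLl_zero]
    rw [sum_fun_eq, PLl_sum] at happ
    have hterm : ∀ k' ∈ Finset.univ, k' ≠ k →
        PLl lam (List.finRange N) n'
          (∑ l' ∈ Finset.range (n k'), bu (lam k') l' (u k' l')) = 0 := by
      intro k' _ hkk
      apply PLl_kill (hne k') (List.mem_finRange k')
      rw [show n' k' = n k' from Function.update_of_ne hkk r n]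
      exact InW_sum fun l' hl' => InW_single _ (Finset.mem_range.mp hl') _
    rw [Finset.sum_eq_single k hterm (fun h => absurd (Finset.mem_univ k) h)] at happ
    rw [PLl_sum, hr, Finset.sum_range_succ] at happ
    have hkill : ∀ l' ∈ Finset.range r,
        PLl lam (List.finRange N) n' (bu (lam k) l' (u k l')) = 0 := by
      intro l' hl'
      apply PLl_kill (hne k) (List.mem_finRange k)
      rw [show n' k = r from Function.update_self k r n]
      exact InW_single _ (Finset.mem_range.mp hl') _
    rw [Finset.sum_congr rfl hkill, Finset.sum_const_zero, zero_add] at happ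
    rw [PLl_eval (hne k) (List.nodup_finRange N) (List.mem_finRange k)
      (Function.update_self k r n) (u k r), smul_bu] at happ
    have hc : ((List.finRange N).map fun j =>
        (lam k - lam j)^(Function.update n' k 0 j)).prod ≠ 0 := by
      rw [hn', Function.update_idem]
      exact cK_ne_zero hinj k n
    have hv := congrFun happ (-1)
    rw [show bu (lam k) 0
        ((((List.finRange N).map fun j =>
          (lam k - lam j)^(Function.update n' k 0 j)).prod) • u k r) (-1)
        = B (lam k) 0 (-1) •
          ((((List.finRange N).map fun j =>
            (lam k - lam j)^(Function.update n' k 0 j)).prod) • u k r) from rfl,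
      B_zero] at hv
    norm_num at hv
    rcases hv with ⟨a, ha, hna⟩ | hv
    · have hak : k = a := hinj (sub_eq_zero.mp ha)
      subst hak
      exact absurd (Function.update_self k 0 n') hna
    · exact hv
  by_cases hlr : l = r
  · rwa [hlr]
  · have hlt : l < r := by omega
    have hz' : (fun m => ∑ k', ∑ l' ∈ Finset.range (n' k'), B (lam k') l' m • u k' l')
        = 0 := by
      funext m
      show (∑ k', ∑ l' ∈ Finset.range (n' k'), B (lam k') l' m • u k' l') = 0
      have heqs : ∑ k', ∑ l' ∈ Finset.range (n' k'), B (lam k') l' m • u k' l'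
          = ∑ k', ∑ l' ∈ Finset.range (n k'), B (lam k') l' m • u k' l' := by
        apply Finset.sum_congr rfl
        intro k' _
        by_cases hkk : k' = k
        · subst hkk
          rw [show n' k' = r from Function.update_self k' r n, hr,
            Finset.sum_range_succ, htop, smul_zero, add_zero]
        · rw [show n' k' = n k' from Function.update_of_ne hkk r n]
      rw [heqs]
      simpa using congrFun hzero m
    have hsu := sum_update_lt (n := n) (k := k) hr
    rw [← hn'] at hsu
    exact ih (∑ j, n' j) (by omega) n' u rfl hz' k l
      (by rw [show n' k = r from Function.update_self k r n]; exact hlt)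

/-! ### Bridge: diagonals of two-variable distributions -/

def diag (a : ℤ → ℤ → M) (t : ℤ) : ℤ → M := fun m => a m (t - m)

lemma diag_mulZ (lam : ℂ) (a : ℤ → ℤ → M) (t : ℤ) :
    diag (mulZsubLW lam a) t = SL lam (diag a (t-1)) := by
  funext m
  show a (m-1) (t-m) - lam • a m (t-m-1) = a (m-1) (t-1-(m-1)) - lam • a m (t-1-m)
  rw [show (t-1-(m-1) : ℤ) = t - m from by ring, show (t-1-m : ℤ) = t-m-1 from by ring]

lemma diag_mulZ_iter (lam : ℂ) (p : ℕ) (a : ℤ → ℤ → M) (t : ℤ) :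
    diag ((mulZsubLW lam)^[p] a) t = (SL lam)^[p] (diag a (t - p)) := by
  induction p generalizing t with
  | zero => simp
  | succ p ih =>
      rw [Function.iterate_succ_apply', diag_mulZ, ih (t-1), Function.iterate_succ_apply',
        show (t - 1 - (p:ℤ)) = t - ((p:ℕ)+1 : ℕ) from by push_cast; ring]

lemma diag_foldr (lam : Fin N → ℂ) (n : Fin N → ℕ) (a : ℤ → ℤ → M) :
    ∀ (L : List (Fin N)) (t : ℤ),
      diag (L.foldr (fun k acc => (mulZsubLW (lam k))^[n k] acc) a) t
        = PLl lam L n (diag a (t - ((L.map n).sum : ℕ))) := by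
  intro L
  induction L with
  | nil => intro t; simp [PLl_nil]
  | cons k L ih =>
      intro t
      show diag ((mulZsubLW (lam k))^[n k] (L.foldr _ a)) t = _
      have harg : (t - (n k:ℤ) - (((L.map n).sum : ℕ) : ℤ)) = t - ((((k::L).map n).sum : ℕ) : ℤ) := by
        rw [List.map_cons, List.sum_cons]
        push_cast
        ring
      rw [diag_mulZ_iter, ih (t - n k), PLl_cons, harg]

lemma diag_zero (t : ℤ) : diag (0 : ℤ → ℤ → M) t = 0 := rfl

lemma mulLocality_zero_iff (lam : Fin N → ℂ) (n : Fin N → ℕ) (a : ℤ → ℤ → M) :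
    mulLocality lam n a = 0 ↔
      ∀ t : ℤ, PLl lam (List.finRange N) n (diag a t) = 0 := by
  constructor
  · intro h t
    have hd := diag_foldr lam n a (List.finRange N)
      (t + (((List.finRange N).map n).sum : ℕ))
    rw [show (List.finRange N).foldr (fun k acc => (mulZsubLW (lam k))^[n k] acc) a
        = mulLocality lam n a from rfl, h, diag_zero,
      show (t + (((List.finRange N).map n).sum : ℕ) - (((List.finRange N).map n).sum : ℕ) : ℤ)
        = t from by ring] at hd
    exact hd.symm
  · intro h
    funext m q
    have hd := diag_foldr lam n a (List.finRange N) (m + q)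
    rw [h (m + q - ((((List.finRange N).map n).sum : ℕ) : ℤ))] at hd
    calc mulLocality lam n a m q
        = diag (mulLocality lam n a) (m + q) m := by
          show _ = mulLocality lam n a m (m + q - m)
          rw [show (m + q - m : ℤ) = q from by ring]
      _ = 0 := by simpa [mulLocality] using congrFun hd m

/-! ### Delta-function computations -/

lemma derivLWC_iter (lam : ℂ) (l : ℕ) (m q : ℤ) :
    ((derivLWC lam)^[l] (fdeltaC lam)) m q
      = lam⁻¹^l * (∏ i ∈ Finset.range l, ((q:ℂ) + i + 1)) * fdeltaC lam m (q + l) := by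
  induction l generalizing q with
  | zero => simp
  | succ l ih =>
      rw [Function.iterate_succ_apply']
      show lam⁻¹ * (((q+1 : ℤ) : ℂ) * ((derivLWC lam)^[l] (fdeltaC lam)) m (q+1)) = _
      rw [ih (q+1), Finset.prod_range_succ' (fun i => (q:ℂ) + i + 1) l,
        show ((q:ℤ)+1+(l:ℕ) : ℤ) = q + ((l:ℕ)+1 : ℤ) from by push_cast; ring]
      have hcast : ∀ i ∈ Finset.range l, (((q+1 : ℤ)):ℂ) + i + 1 = (q:ℂ) + ((i:ℕ)+1:ℕ) + 1 := by
        intro i _; push_cast; ring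
      rw [Finset.prod_congr rfl hcast]
      push_cast
      ring

lemma P_reflect (l : ℕ) (m : ℤ) :
    ∏ i ∈ Finset.range l, (((-m-1-(l:ℤ) : ℤ) : ℂ) + i + 1)
      = (-1)^l * ∏ i ∈ Finset.range l, ((m:ℂ) + i + 1) := by
  have h1 : ∀ i ∈ Finset.range l, (((-m-1-(l:ℤ) : ℤ) : ℂ) + i + 1)
      = (-1) * ((m:ℂ) + (l:ℂ) - i) := by
    intro i _; push_cast; ring
  rw [Finset.prod_congr rfl h1, Finset.prod_mul_distrib, Finset.prod_const,
    Finset.card_range]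
  congr 1
  rw [← Finset.prod_range_reflect (fun j => (m:ℂ) + j + 1) l]
  apply Finset.prod_congr rfl
  intro j hj
  have hj' := Finset.mem_range.mp hj
  have hcast : ((l - 1 - j : ℕ) : ℂ) = (l:ℂ) - 1 - j := by
    rw [Nat.cast_sub (by omega), Nat.cast_sub (by omega)]
    push_cast
    ring
  rw [hcast]
  ring

lemma divPow_delta {lam : ℂ} (h : lam ≠ 0) (l : ℕ) (m q : ℤ) :
    divPowDerivLWC lam l (fdeltaC lam) m q
      = if q = -m-1-(l:ℤ) then B lam l m else 0 := by
  show (l.factorial : ℂ)⁻¹ * ((derivLWC lam)^[l] (fdeltaC lam)) m q = _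
  rw [derivLWC_iter]
  by_cases hq : q = -m-1-(l:ℤ)
  · rw [if_pos hq]
    subst hq
    show _ * (_ * _ * (if (-m-1-(l:ℤ)) + l = -m-1 then lam ^ (-m-1) else 0)) = _
    rw [if_pos (by ring), P_reflect l m, B]
    rw [show lam⁻¹^l = lam ^ (-(l:ℤ)) from by
      rw [zpow_neg, zpow_natCast, inv_pow]]
    rw [show lam ^ (-m-1-(l:ℤ)) = lam ^ (-(l:ℤ)) * lam ^ (-m-1) from by
      rw [← zpow_add₀ h]; congr 1; ring]
    ring
  · rw [if_neg hq]
    show _ * (_ * _ * (if q + (l:ℤ) = -m-1 then lam ^ (-m-1) else 0)) = _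
    rw [if_neg (fun hc => hq (by omega))]
    ring

lemma mulCoeff_eval {U : Type*} [Ring U] [Algebra ℂ U] {lam : ℂ} (h : lam ≠ 0)
    (c : ℤ → U) (l : ℕ) (m q : ℤ) :
    mulCoeff c (divPowDerivLWC lam l (fdeltaC lam)) m q
      = B lam l m • c (q + m + 1 + l) := by
  show (∑ᶠ j : ℤ, divPowDerivLWC lam l (fdeltaC lam) m j • c (q - j)) = _
  rw [finsum_eq_single _ (-m-1-(l:ℤ))
    (fun x hx => by rw [divPow_delta h, if_neg hx, zero_smul])]
  rw [divPow_delta h, if_pos rfl,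
    show (q - (-m-1-(l:ℤ)) : ℤ) = q + m + 1 + (l:ℤ) from by ring]

lemma rep_diag {U : Type*} [Ring U] [Algebra ℂ U] {lam : Fin N → ℂ} (hne : ∀ k, lam k ≠ 0)
    (n : Fin N → ℕ) (c : Fin N → ℕ → ℤ → U) {a : ℤ → ℤ → U}
    (hc : a = ∑ k, ∑ l ∈ Finset.range (n k),
      mulCoeff (c k l) (divPowDerivLWC (lam k) l (fdeltaC (lam k))))
    (m t : ℤ) :
    a m (t - m) = ∑ k, ∑ l ∈ Finset.range (n k), B (lam k) l m • c k l (t+1+(l:ℤ)) := by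
  rw [hc]
  simp only [Finset.sum_apply]
  refine Finset.sum_congr rfl fun k _ => Finset.sum_congr rfl fun l _ => ?_
  rw [mulCoeff_eval (hne k), show (t - m + m + 1 + (l:ℤ)) = t + 1 + (l:ℤ) from by ring]

end NPointAux

/-- (Delta-function decomposition of N-point local distributions.)
`(z−λ₁w)^{n₁}⋯(z−λ_Nw)^{n_N}·a(z,w) = 0` iff
`a(z,w) = Σ_{k=1}^{N} Σ_{l=0}^{n_k−1} c_{kl}(w) ∂^{(l)}_{λ_kw}δ(z−λ_kw)` for some
`c_{kl}(w) ∈ U[[w^{±1}]]`; moreover, the coefficients `c_{kl}(w)` are unique. -/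
theorem npoint_locality_decomposition {U : Type*} [Ring U] [Algebra ℂ U]
    (N : ℕ) (lam : Fin N → ℂ) (hne : ∀ k, lam k ≠ 0) (hinj : Function.Injective lam)
    (n : Fin N → ℕ) (hn : ∀ k, 0 < n k) (a : ℤ → ℤ → U) :
    (mulLocality lam n a = 0 ↔
      ∃ c : Fin N → ℕ → (ℤ → U),
        a = ∑ k : Fin N, ∑ l ∈ Finset.range (n k),
              mulCoeff (c k l) (divPowDerivLWC (lam k) l (fdeltaC (lam k)))) ∧
    (∀ c c' : Fin N → ℕ → (ℤ → U),
      a = ∑ k : Fin N, ∑ l ∈ Finset.range (n k),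
            mulCoeff (c k l) (divPowDerivLWC (lam k) l (fdeltaC (lam k))) →
      a = ∑ k : Fin N, ∑ l ∈ Finset.range (n k),
            mulCoeff (c' k l) (divPowDerivLWC (lam k) l (fdeltaC (lam k))) →
      ∀ k : Fin N, ∀ l : ℕ, l < n k → c k l = c' k l) := by
  classical
  have hloc := NPointAux.mulLocality_zero_iff lam n a
  constructor
  · constructor
    · intro h
      have hch : ∀ t : ℤ, ∃ u : Fin N → ℕ → U, NPointAux.diag a t
          = fun m => ∑ k, ∑ l ∈ Finset.range (n k), NPointAux.B (lam k) l m • u k l :=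
        fun t => NPointAux.FWD hne hinj (∑ k, n k) n _ rfl ((hloc.mp h) t)
      choose u hu using hch
      refine ⟨fun k l s => u (s - 1 - (l:ℤ)) k l, ?_⟩
      funext m q
      have hR : (∑ k : Fin N, ∑ l ∈ Finset.range (n k),
            mulCoeff (fun s => u (s - 1 - (l:ℤ)) k l)
              (divPowDerivLWC (lam k) l (fdeltaC (lam k)))) m q
          = ∑ k, ∑ l ∈ Finset.range (n k), NPointAux.B (lam k) l m • u (m+q) k l := by
        simp only [Finset.sum_apply]
        refine Finset.sum_congr rfl fun k _ => Finset.sum_congr rfl fun l _ => ?_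
        rw [NPointAux.mulCoeff_eval (hne k)]
        rw [show (q + m + 1 + (l:ℤ) - 1 - (l:ℤ)) = m + q from by ring]
      rw [hR]
      have h1 : a m q = NPointAux.diag a (m+q) m := by
        show a m q = a m (m+q-m)
        rw [show (m+q-m : ℤ) = q from by ring]
      rw [h1]
      simpa using congrFun (hu (m+q)) m
    · rintro ⟨c, hc⟩
      rw [hloc]
      intro t
      have hdiag : NPointAux.diag a t
          = ∑ k, ∑ l ∈ Finset.range (n k), NPointAux.bu (lam k) l (c k l (t+1+(l:ℤ))) := by
        funext m
        have := NPointAux.rep_diag hne n c hc m t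
        show a m (t - m) = _
        rw [this]
        simp [NPointAux.bu, Finset.sum_apply]
      rw [hdiag, NPointAux.PLl_sum]
      apply Finset.sum_eq_zero
      intro k _
      apply NPointAux.PLl_kill (hne k) (List.mem_finRange k)
      exact NPointAux.InW_sum fun l hl => NPointAux.InW_single _ (Finset.mem_range.mp hl) _
  · intro c c' hc hc' k l hl
    funext sarg
    have key : ∀ t : ℤ, c k l (t+1+(l:ℤ)) = c' k l (t+1+(l:ℤ)) := by
      intro t
      have hz : (fun m => ∑ k', ∑ l' ∈ Finset.range (n k'),
          NPointAux.B (lam k') l' m • (c k' l' (t+1+(l':ℤ)) - c' k' l' (t+1+(l':ℤ)))) = 0 := by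
        funext m
        show (∑ k', ∑ l' ∈ Finset.range (n k'),
          NPointAux.B (lam k') l' m • (c k' l' (t+1+(l':ℤ)) - c' k' l' (t+1+(l':ℤ)))) = 0
        have h1 := NPointAux.rep_diag hne n c hc m t
        have h2 := NPointAux.rep_diag hne n c' hc' m t
        calc (∑ k', ∑ l' ∈ Finset.range (n k'),
              NPointAux.B (lam k') l' m • (c k' l' (t+1+(l':ℤ)) - c' k' l' (t+1+(l':ℤ))))
            = ∑ k', ∑ l' ∈ Finset.range (n k'),
                (NPointAux.B (lam k') l' m • c k' l' (t+1+(l':ℤ))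
                  - NPointAux.B (lam k') l' m • c' k' l' (t+1+(l':ℤ))) := by
              exact Finset.sum_congr rfl fun k' _ => Finset.sum_congr rfl fun l' _ =>
                smul_sub _ _ _
          _ = 0 := by
              simp only [Finset.sum_sub_distrib]
              rw [← h1, ← h2, sub_self]
      have := NPointAux.INDEP hne hinj (∑ j, n j) n _ rfl hz k l hl
      exact sub_eq_zero.mp this
    have := key (sarg - 1 - (l:ℤ))
    rwa [show (sarg - 1 - (l:ℤ) + 1 + (l:ℤ)) = sarg from by ring] at this

end
end

section
/- Let U be a unital associative ℂ-algebra, λ ∈ ℂ with λ ≠ 0, ε ∈ {+1,−1}, and a(z) ∈ U[[z^{±1}]]. Suppose (z−λw)·(a(z)a(w) − ε·a(w)a(z)) = 0 in U[[z^{±1},w^{±1}]] but a(z)a(w) − ε·a(w)a(z) ≠ 0. Then λ² = 1. -/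
/- One-variable formal distributions `a(z) = Σ_{m∈ℤ} a_m z^m ∈ U[[z^{±1}]]` are encoded as
`ℤ → U`; the coefficientwise product `a(z)b(w) ∈ U[[z^{±1},w^{±1}]]` has `z^m w^n` coefficient
`a_m b_n`, i.e. it is `fun m n => a m * b n : ℤ → ℤ → U`. -/

noncomputable section

/-- If `(z−λw)·(a(z)a(w) − ε·a(w)a(z)) = 0` but `a(z)a(w) − ε·a(w)a(z) ≠ 0`, where `λ ≠ 0`
and `ε = ±1`, then `λ² = 1`. -/
theorem order_one_self_locality_point {U : Type*} [Ring U] [Algebra ℂ U]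
    (lam : ℂ) (hlam : lam ≠ 0) (ε : ℂ) (hε : ε = 1 ∨ ε = -1) (a : ℤ → U)
    (h1 : mulZsubLW lam (fun m n => a m * a n - ε • (a n * a m)) = 0)
    (h2 : (fun m n : ℤ => a m * a n - ε • (a n * a m)) ≠ 0) :
    lam ^ 2 = 1 := by
  set b : ℤ → ℤ → U := fun m n => a m * a n - ε • (a n * a m) with hb
  have hε2 : ε * ε = 1 := by rcases hε with h | h <;> simp [h]
  -- the shift relation from h1
  have hR : ∀ m n : ℤ, b (m - 1) n = lam • b m (n - 1) := by
    intro m n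
    have := congrFun (congrFun h1 m) n
    simpa [mulZsubLW, sub_eq_zero] using this
  -- (-ε)-antisymmetry of b
  have hA : ∀ m n : ℤ, b n m = (-ε) • b m n := by
    intro m n
    show a n * a m - ε • (a m * a n) = (-ε) • (a m * a n - ε • (a n * a m))
    rw [neg_smul, smul_sub, smul_smul, hε2, one_smul, neg_sub]
  -- the opposite shift relation
  have hR' : ∀ p q : ℤ, b p (q - 1) = lam • b (p - 1) q := by
    intro p q
    calc b p (q - 1) = (-ε) • b (q - 1) p := hA _ _
      _ = (-ε) • (lam • b q (p - 1)) := by rw [hR]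
      _ = lam • ((-ε) • b q (p - 1)) := smul_comm _ _ _
      _ = lam • b (p - 1) q := by rw [← hA]
  -- hence b = λ² • b pointwise
  have key : ∀ i j : ℤ, b i j = (lam ^ 2) • b i j := by
    intro i j
    have h1' : b i j = lam • b (i + 1) (j - 1) := by
      have := hR (i + 1) j; simpa using this
    have h2' : b (i + 1) (j - 1) = lam • b i j := by
      have := hR' (i + 1) j; simpa using this
    rw [pow_two, mul_smul, ← h2', ← h1']
  -- pick a point where b ≠ 0
  have hex : ∃ i j : ℤ, b i j ≠ 0 := by
    by_contra hc
    push_neg at hc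
    apply h2
    funext i j
    exact hc i j
  obtain ⟨i, j, hij⟩ := hex
  by_contra hne
  have hs : (1 - lam ^ 2) • b i j = 0 := by
    rw [sub_smul, one_smul, ← key, sub_self]
  have hnz : (1 : ℂ) - lam ^ 2 ≠ 0 := fun h => hne (by linear_combination -h)
  have h4 := congrArg (fun x => (1 - lam ^ 2)⁻¹ • x) hs
  simp only [smul_smul, inv_mul_cancel₀ hnz, one_smul, smul_zero] at h4
  exact hij h4

end
end

section
/- (Operator Product Expansion) Let U be a unital associative ℂ-algebra and let a(z), b(z) ∈ U[[z^{±1}]] be N-point mutually local at distinct nonzero λ₁,…,λ_N with exponents n₁,…,n_N and sign ε ∈ {+1,−1}, i.e. (z−λ₁w)^{n₁}⋯(z−λ_N w)^{n_N}(a(z)b(w) − ε b(w)a(z)) = 0. Let c_{jk}(w) ∈ U[[w^{±1}]] (1 ≤ j ≤ N, 0 ≤ k ≤ n_j−1) be the unique coefficients with a(z)b(w) − ε b(w)a(z) = Σ_{j=1}^{N} Σ_{k=0}^{n_j−1} c_{jk}(w) ∂^{(k)}_{λ_j w}δ(z−λ_j w). Then a(z)b(w) = Σ_{j=1}^{N}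 Σ_{k=0}^{n_j−1} c_{jk}(w) · i_{z,w}(z−λ_j w)^{−k−1} + :a(z)b(w):. -/
/- One-variable formal distributions `a(z) = Σ_{m∈ℤ} a_m z^m ∈ U[[z^{±1}]]` are encoded as
`ℤ → U`; the coefficientwise product `a(z)b(w) ∈ U[[z^{±1},w^{±1}]]` is
`fun m n => a m * b n : ℤ → ℤ → U`. -/

noncomputable section

/-- The expansion `i_{z,w}(z−λw)^{−k−1} = Σ_{m≥0} C(m+k,k) λ^m z^{−m−k−1} w^m` (ℂ-valued). -/
def izwExp (lam : ℂ) (k : ℕ) : ℤ → ℤ → ℂ :=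
  fun p q => if 0 ≤ q ∧ p = -q - k - 1 then ((q.toNat + k).choose k : ℂ) * lam ^ q else 0

/-- The part of `a(z)` with nonnegative powers of `z`. -/
def posPart {U : Type*} [Ring U] (a : ℤ → U) : ℤ → U := fun m => if 0 ≤ m then a m else 0

/-- The part of `a(z)` with negative powers of `z`. -/
def negPart {U : Type*} [Ring U] (a : ℤ → U) : ℤ → U := fun m => if m < 0 then a m else 0

/-- The normal ordered product `:a(z)b(w): = a(z)_+ b(w) + ε b(w) a(z)_−`. -/
def normalOrd {U : Type*} [Ring U] [Algebra ℂ U] (ε : ℂ) (a b : ℤ → U) : ℤ → ℤ → U :=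
  fun p q => posPart a p * b q + ε • (b q * negPart a p)


lemma iter_derivLWC (lam : ℂ) (k : ℕ) (m n : ℤ) :
    ((derivLWC lam)^[k] (fdeltaC lam)) m n =
      if n = -m - 1 - k then
        (lam⁻¹)^k * (∏ i ∈ Finset.range k, ((n + i + 1 : ℤ) : ℂ)) * lam ^ (-m - 1) else 0 := by
  induction k generalizing n with
  | zero => simp [fdeltaC]
  | succ k ih =>
    rw [Function.iterate_succ_apply']
    show lam⁻¹ * (((n + 1 : ℤ) : ℂ) * ((derivLWC lam)^[k] (fdeltaC lam)) m (n + 1)) = _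
    rw [ih]
    by_cases h : n = -m - 1 - (k + 1 : ℕ)
    · have h1 : n + 1 = -m - 1 - (k : ℕ) := by push_cast at h ⊢; omega
      rw [if_pos h1, if_pos h]
      rw [Finset.prod_range_succ' (fun i => ((n + i + 1 : ℤ) : ℂ))]
      rw [Finset.prod_congr rfl (fun i _ => show ((n + (i+1:ℕ) + 1 : ℤ) : ℂ) = (((n+1) + i + 1 : ℤ) : ℂ) by push_cast; ring)]
      push_cast
      ring
    · have h1 : ¬ (n + 1 = -m - 1 - (k : ℕ)) := by push_cast at h ⊢; omega
      rw [if_neg h1, if_neg h]; ring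

lemma prod_cast (j k : ℕ) :
    (∏ i ∈ Finset.range k, (((j : ℤ) + i + 1 : ℤ) : ℂ)) = ((j+1).ascFactorial k : ℂ) := by
  induction k with
  | zero => simp
  | succ k ih =>
    rw [Finset.prod_range_succ, ih, Nat.ascFactorial_succ]
    push_cast; ring

lemma key_s8 (lam : ℂ) (hlam : lam ≠ 0) (k : ℕ) (p j : ℤ) (hp : p < 0) :
    divPowDerivLWC lam k (fdeltaC lam) p j = izwExp lam k p j := by
  unfold divPowDerivLWC izwExp
  rw [iter_derivLWC]
  by_cases h : j = -p - 1 - (k : ℕ)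
  · rw [if_pos h]
    by_cases hj : 0 ≤ j
    · have hcond : 0 ≤ j ∧ p = -j - k - 1 := ⟨hj, by omega⟩
      rw [if_pos hcond]
      have hjt : (j.toNat : ℤ) = j := Int.toNat_of_nonneg hj
      have hprod : (∏ i ∈ Finset.range k, ((j + i + 1 : ℤ) : ℂ))
          = ((j.toNat + 1).ascFactorial k : ℂ) := by
        rw [← prod_cast]
        exact Finset.prod_congr rfl (fun i _ => by rw [hjt])
      rw [hprod, Nat.ascFactorial_eq_factorial_mul_choose]
      have hz : lam ^ (-p - 1) = lam ^ j * lam ^ (k : ℕ) := by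
        have : (-p - 1 : ℤ) = j + (k : ℕ) := by omega
        rw [this, zpow_add₀ hlam, zpow_natCast]
      rw [hz]
      push_cast
      rw [inv_pow]
      have hf : (k.factorial : ℂ) ≠ 0 := Nat.cast_ne_zero.mpr k.factorial_ne_zero
      have hk : lam ^ k ≠ 0 := pow_ne_zero _ hlam
      linear_combination (((j.toNat + k).choose k : ℂ) * lam ^ j * lam ^ k * (lam ^ k)⁻¹) *
          mul_inv_cancel₀ hf +
        (((j.toNat + k).choose k : ℂ) * lam ^ j) * mul_inv_cancel₀ hk
    · have hcond : ¬ (0 ≤ j ∧ p = -j - k - 1) := by tauto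
      rw [if_neg hcond]
      have hjk : -(k : ℤ) ≤ j := by omega
      have hi : (-j - 1).toNat ∈ Finset.range k := by
        rw [Finset.mem_range]; omega
      have : (∏ i ∈ Finset.range k, ((j + i + 1 : ℤ) : ℂ)) = 0 := by
        apply Finset.prod_eq_zero hi
        have : (j + ((-j - 1).toNat : ℤ) + 1 : ℤ) = 0 := by omega
        rw [this]; norm_num
      rw [this]; ring
  · rw [if_neg h]
    have : ¬ (0 ≤ j ∧ p = -j - k - 1) := by
      rintro ⟨h1, h2⟩; omega
    rw [if_neg this]; ring

/-- (Operator Product Expansion.) If `a(z), b(z)` are N-point mutually local with sign `ε` and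
`a(z)b(w) − ε b(w)a(z) = Σ_{j=1}^{N} Σ_{k=0}^{n_j−1} c_{jk}(w) ∂^{(k)}_{λ_jw}δ(z−λ_jw)`, then
`a(z)b(w) = Σ_{j=1}^{N} Σ_{k=0}^{n_j−1} c_{jk}(w)·i_{z,w}(z−λ_jw)^{−k−1} + :a(z)b(w):`. -/
theorem operator_product_expansion {U : Type*} [Ring U] [Algebra ℂ U]
    (N : ℕ) (lam : Fin N → ℂ) (hne : ∀ k, lam k ≠ 0) (hinj : Function.Injective lam)
    (n : Fin N → ℕ) (ε : ℂ) (hε : ε = 1 ∨ ε = -1) (a b : ℤ → U)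
    (hloc : mulLocality lam n (fun p q => a p * b q - ε • (b q * a p)) = 0)
    (c : Fin N → ℕ → (ℤ → U))
    (hdec : (fun p q : ℤ => a p * b q - ε • (b q * a p)) =
      ∑ j : Fin N, ∑ k ∈ Finset.range (n j),
        mulCoeff (c j k) (divPowDerivLWC (lam j) k (fdeltaC (lam j)))) :
    (fun p q : ℤ => a p * b q) =
      (∑ j : Fin N, ∑ k ∈ Finset.range (n j), mulCoeff (c j k) (izwExp (lam j) k))
        + normalOrd ε a b := by
  funext p q
  have hd := congrFun (congrFun hdec p) q
  simp only [Finset.sum_apply] at hd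
  simp only [Pi.add_apply, Finset.sum_apply]
  by_cases hp : p < 0
  · have heq : ∀ (j : Fin N) (k : ℕ),
        mulCoeff (c j k) (divPowDerivLWC (lam j) k (fdeltaC (lam j))) p q
          = mulCoeff (c j k) (izwExp (lam j) k) p q := by
      intro j k
      unfold mulCoeff
      exact finsum_congr fun i => by rw [key_s8 (lam j) (hne j) k p i hp]
    have hsum : (∑ j : Fin N, ∑ k ∈ Finset.range (n j),
        mulCoeff (c j k) (divPowDerivLWC (lam j) k (fdeltaC (lam j))) p q)
        = ∑ j : Fin N, ∑ k ∈ Finset.range (n j), mulCoeff (c j k) (izwExp (lam j) k) p q :=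
      Finset.sum_congr rfl fun j _ => Finset.sum_congr rfl fun k _ => heq j k
    have hno : normalOrd ε a b p q = ε • (b q * a p) := by
      simp [normalOrd, _root_.posPart, _root_.negPart, hp, not_le.mpr hp]
    rw [hno, ← hsum, ← hd]
    abel
  · push_neg at hp
    have hno : normalOrd ε a b p q = a p * b q := by
      simp [normalOrd, _root_.posPart, _root_.negPart, hp, not_lt.mpr hp]
    have hz : ∀ (j : Fin N) (k : ℕ), mulCoeff (c j k) (izwExp (lam j) k) p q = 0 := by
      intro j k
      unfold mulCoeff
      have : ∀ i : ℤ, izwExp (lam j) k p i • c j k (q - i) = 0 := by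
        intro i
        have : izwExp (lam j) k p i = 0 := by
          unfold izwExp
          rw [if_neg]
          rintro ⟨h1, h2⟩
          omega
        rw [this, zero_smul]
      rw [finsum_congr this, finsum_zero]
    rw [hno, Finset.sum_eq_zero fun j _ => Finset.sum_eq_zero fun k _ => hz j k, zero_add]

end
end

section
/- (Taylor expansion formula for normal ordered products) Let a(z), b(z) be fields on a ℂ-vector space V with parities p(a), p(b) ∈ {0,1}, set ε = (−1)^{p(a)p(b)}, and let λ ∈ ℂ with λ ≠ 0. Define i_{z,z₀} :a(λz+z₀)b(z): := ( Σ_{n<0} a_{(n)} (λz+z₀)^{−n−1} )·b(z) + ε·b(z)·( Σ_{n≥0} a_{(n)} · i_{z,z₀}(λz+z₀)^{−n−1} ), where for n ≥ 0, i_{z,z₀}(λz+z₀)^{−n−1} := Σ_{k≥0} C(−n−1,k) (λz)^{−n−1−k} z₀^k. Then, in End(V)[[z^{±1}]][[z₀]]: i_{z,z₀} :a(λz+z₀)b(z): = Σ_{k≥0} ( :(∂^{(k)}_{λz} a(λz)) b(z): ) z₀^k, where ∂^{(k)}_{λz} a(λz) := Σ_{n∈ℤ} C(−n−1,k) a_{(n)}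 λ^{−n−1−k} z^{−n−1−k}. -/
/- A field `a(z) = Σ_{n∈ℤ} a_{(n)} z^{−n−1}` on a ℂ-vector space `V` is encoded through its
modes `a : ℤ → Module.End ℂ V`; the coefficient of `z^j` is the mode `a (−j−1)`.  Products of
fields in a single variable are evaluated on vectors, where all sums are finite; such finite
sums are expressed by `∑ᶠ` (finsum). -/

noncomputable section

/-- The field (truncation) condition: for every `v`, `a_{(n)} v = 0` for `n` large enough. -/
def IsVertexField {V : Type*} [AddCommGroup V] [Module ℂ V]
    (a : ℤ → Module.End ℂ V) : Prop :=
  ∀ v : V, ∃ N : ℕ, ∀ n : ℤ, (N : ℤ) ≤ n → a n v = 0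

/-- The generalized binomial coefficient `C(m,k) = m(m−1)⋯(m−k+1)/k!` for `m ∈ ℤ`, `k ∈ ℕ`. -/
def gbinom (m : ℤ) (k : ℕ) : ℂ :=
  (∏ i ∈ Finset.range k, ((m : ℂ) - (i : ℂ))) / (k.factorial : ℂ)

/-- The coefficient of `z^j` in
`∂^{(k)}_{λz} a(λz) = Σ_{n∈ℤ} C(−n−1,k) a_{(n)} λ^{−n−1−k} z^{−n−1−k}`. -/
def divDerivFieldCoeff {V : Type*} [AddCommGroup V] [Module ℂ V]
    (lam : ℂ) (k : ℕ) (a : ℤ → Module.End ℂ V) : ℤ → Module.End ℂ V :=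
  fun j => (gbinom (j + (k : ℤ)) k * lam ^ j) • a (-j - (k : ℤ) - 1)

/-- The coefficient of `z^m` of the normal ordered product `:c(z)b(z): = c(z)_+b(z) + ε b(z)c(z)_−`
applied to a vector `v`, where `x` is the coefficient function (in powers of `z`) of the field
`c(z)` and `b` is given by its modes. -/
def normalOrdApp {V : Type*} [AddCommGroup V] [Module ℂ V] (ε : ℂ)
    (x : ℤ → Module.End ℂ V) (b : ℤ → Module.End ℂ V) (m : ℤ) (v : V) : V :=
  (∑ᶠ j : ℤ, (if 0 ≤ j then x j else 0) (b (j - m - 1) v))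
    + ε • ∑ᶠ j : ℤ, b (j - m - 1) ((if j < 0 then x j else 0) v)

lemma prod_range_cast (n k : ℕ) :
    ∏ i ∈ Finset.range k, ((n : ℂ) - (i : ℂ)) = (n.descFactorial k : ℂ) := by
  induction k with
  | zero => simp
  | succ k ih =>
    rw [Finset.prod_range_succ, ih, Nat.descFactorial_succ, Nat.cast_mul]
    rcases le_or_gt k n with h | h
    · rw [Nat.cast_sub h]; ring
    · rw [Nat.descFactorial_eq_zero_iff_lt.2 h]; simp

lemma gbinom_natCast (n k : ℕ) : gbinom (n : ℤ) k = (n.choose k : ℂ) := by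
  have h := prod_range_cast n k
  rw [gbinom]
  push_cast at h ⊢
  rw [h, Nat.descFactorial_eq_factorial_mul_choose]
  push_cast
  have hk : (k.factorial : ℂ) ≠ 0 := by exact_mod_cast k.factorial_ne_zero
  field_simp

lemma gbinom_reflect (m : ℤ) (k : ℕ) :
    gbinom m k = (-1 : ℂ) ^ k * gbinom ((k : ℤ) - 1 - m) k := by
  unfold gbinom
  rw [← Finset.prod_range_reflect (fun i => (((k : ℤ) - 1 - m : ℤ) : ℂ) - i) k]
  have : ∀ i ∈ Finset.range k,
      ((((k : ℤ) - 1 - m : ℤ) : ℂ) - ((k - 1 - i : ℕ) : ℂ)) = -(((m : ℂ)) - i) := by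
    intro i hi
    rw [Finset.mem_range] at hi
    have : ((k - 1 - i : ℕ) : ℂ) = (k : ℂ) - 1 - i := by
      have h1 : i ≤ k - 1 := Nat.le_sub_one_of_lt hi
      rw [Nat.cast_sub h1, Nat.cast_sub (Nat.one_le_of_lt (Nat.lt_of_le_of_lt (Nat.zero_le i) hi))]
      norm_num
    rw [this]
    push_cast
    ring
  rw [Finset.prod_congr rfl this]
  have : ∏ x ∈ Finset.range k, (-((m : ℂ) - x)) =
      (-1 : ℂ) ^ k * ∏ x ∈ Finset.range k, ((m : ℂ) - x) := by
    have h2 : ∏ x ∈ Finset.range k, -((m : ℂ) - x)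
        = ∏ x ∈ Finset.range k, ((-1 : ℂ) * ((m : ℂ) - x)) :=
      Finset.prod_congr rfl fun i _ => (neg_one_mul _).symm
    rw [h2, Finset.prod_mul_distrib, Finset.prod_const, Finset.card_range]
  rw [this, show ((-1 : ℂ) ^ k * (((-1 : ℂ) ^ k * ∏ x ∈ Finset.range k, ((m : ℂ) - x)) /
      (k.factorial : ℂ))) = ((-1 : ℂ) * (-1)) ^ k * (∏ x ∈ Finset.range k, ((m : ℂ) - x)) /
      (k.factorial : ℂ) from by rw [mul_pow]; ring]
  norm_num

lemma gbinom_eq_zero_of_lt {n k : ℕ} (h : n < k) : gbinom (n : ℤ) k = 0 := by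
  rw [gbinom_natCast, Nat.choose_eq_zero_of_lt h, Nat.cast_zero]


/-- (Taylor expansion formula for normal ordered products.) For fields `a(z), b(z)` on `V` with
`ε = (−1)^{p(a)p(b)}` and `λ ≠ 0`, the coefficient of `z₀^k z^m` of
`i_{z,z₀} :a(λz+z₀)b(z): := (Σ_{n<0} a_{(n)}(λz+z₀)^{−n−1})·b(z)
   + ε·b(z)·(Σ_{n≥0} a_{(n)}·i_{z,z₀}(λz+z₀)^{−n−1})`
(with `i_{z,z₀}(λz+z₀)^{−n−1} = Σ_{k≥0} C(−n−1,k)(λz)^{−n−1−k} z₀^k` and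
`C(−n−1,k) = (−1)^k C(n+k,k)`), applied to any `v ∈ V`, equals the coefficient of `z^m` of
`:(∂^{(k)}_{λz} a(λz)) b(z):` applied to `v`. -/
theorem taylor_expansion_normal_ordered_product {V : Type*} [AddCommGroup V] [Module ℂ V]
    (a b : ℤ → Module.End ℂ V) (ha : IsVertexField a) (hb : IsVertexField b)
    (pa pb : ℕ) (hpa : pa ≤ 1) (hpb : pb ≤ 1) (lam : ℂ) (hlam : lam ≠ 0) :
    ∀ (k : ℕ) (m : ℤ) (v : V),
      ((∑ᶠ j : ℤ, (if 0 ≤ j then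
            (((j.toNat + k).choose k : ℂ) * lam ^ j) • a (-j - (k : ℤ) - 1)
          else 0) (b (j - m - 1) v))
        + ((-1 : ℂ) ^ (pa * pb)) • ∑ᶠ j : ℤ, b (j - m - 1)
            ((if j + (k : ℤ) ≤ -1 then
                ((-1 : ℂ) ^ k * (((-j - 1).toNat).choose k : ℂ) * lam ^ j) •
                  a (-j - (k : ℤ) - 1)
              else 0) v))
      = normalOrdApp ((-1 : ℂ) ^ (pa * pb)) (divDerivFieldCoeff lam k a) b m v := by
  intro k m v
  have key1 : ∀ j : ℤ, (0 ≤ j) →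
      ((((j.toNat + k).choose k : ℂ) * lam ^ j) • a (-j - (k : ℤ) - 1))
        = divDerivFieldCoeff lam k a j := by
    intro j hj
    rw [divDerivFieldCoeff]
    congr 2
    have h1 : j + (k : ℤ) = ((j.toNat + k : ℕ) : ℤ) := by
      push_cast; omega
    rw [h1, gbinom_natCast]
  have key2 : ∀ j : ℤ,
      (if j + (k : ℤ) ≤ -1 then
          ((-1 : ℂ) ^ k * (((-j - 1).toNat).choose k : ℂ) * lam ^ j) •
            a (-j - (k : ℤ) - 1)
        else 0)
      = (if j < 0 then divDerivFieldCoeff lam k a j else 0) := by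
    intro j
    rcases le_or_gt (j + (k : ℤ)) (-1) with h | h
    · have hj : j < 0 := by omega
      rw [if_pos h, if_pos hj, divDerivFieldCoeff]
      congr 2
      have h1 : (k : ℤ) - 1 - (j + (k : ℤ)) = (((-j - 1).toNat : ℕ) : ℤ) := by
        push_cast; omega
      rw [gbinom_reflect (j + (k : ℤ)) k, h1, gbinom_natCast]
    · rw [if_neg (not_le.2 h)]
      split_ifs with hj
      · have h1 : j + (k : ℤ) = (((j + (k : ℤ)).toNat : ℕ) : ℤ) := by omega
        have h2 : (j + (k : ℤ)).toNat < k := by omega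
        rw [divDerivFieldCoeff, h1, gbinom_eq_zero_of_lt h2, zero_mul, zero_smul]
      · rfl
  rw [normalOrdApp]
  congr 1
  · refine finsum_congr fun j => ?_
    split_ifs with h
    · rw [key1 j h]
    · rfl
  · congr 1
    refine finsum_congr fun j => ?_
    rw [key2 j]

end
end

section
/- Let U be a unital associative ℂ-algebra and let φ_n ∈ U (n ∈ ℤ) satisfy φ_mφ_n + φ_nφ_m = 2(−1)^m δ_{m,−n}·1 for all m, n ∈ ℤ. Set φ(z)_+ := Σ_{n≥0} φ_n z^n and φ(z)_− := Σ_{n<0} φ_n z^n. Then the normal ordered product :φ(z)φ(z): = φ(z)_+φ(z)_+ − φ(z)_−φ(z)_− (each of whose coefficients is a finite sum in U) equals 1; that is, its z⁰-coefficient is 1 and all its other coefficients vanish. -/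
/- One-variable formal distributions in `U[[z^{±1}]]` are encoded as coefficient functions
`ℤ → U`.  The modes `φ_n` of the free neutral fermion of type B are `φ : ℤ → U`. -/

noncomputable section

/-- The coefficientwise product of two one-variable distributions in the same variable: the
`z^k` coefficient is `Σ_{m+n=k} a_m b_n`, a finite sum (`∑ᶠ`) for the parts used below. -/
def mulSame {U : Type*} [Ring U] (a b : ℤ → U) : ℤ → U :=
  fun k => ∑ᶠ m : ℤ, a m * b (k - m)

/-- The part of `φ(z) = Σ_{n∈ℤ} φ_n z^n` with nonnegative powers: `φ(z)_+ = Σ_{n≥0} φ_n z^n`. -/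
def phiPlus {U : Type*} [Ring U] (φ : ℤ → U) : ℤ → U := fun m => if 0 ≤ m then φ m else 0

/-- The part with negative powers: `φ(z)_− = Σ_{n<0} φ_n z^n`. -/
def phiMinus {U : Type*} [Ring U] (φ : ℤ → U) : ℤ → U := fun m => if m < 0 then φ m else 0

private lemma half_cancel {U : Type*} [Ring U] [Algebra ℂ U] {x y : U}
    (h : x + x = y + y) : x = y := by
  have h2 : (2 : ℂ) • x = (2 : ℂ) • y := by rw [two_smul, two_smul]; exact h
  have := congrArg (fun z => (2⁻¹ : ℂ) • z) h2
  simpa [smul_smul] using this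

/-- If `φ_mφ_n + φ_nφ_m = 2(−1)^m δ_{m,−n}·1` (the Clifford algebra `Cl_B` of the free
neutral fermion of type B), then the normal ordered product
`:φ(z)φ(z): = φ(z)_+φ(z)_+ − φ(z)_−φ(z)_−` equals `1`. -/
theorem typeB_diagonal_normal_ordered_product {U : Type*} [Ring U] [Algebra ℂ U]
    (φ : ℤ → U)
    (h : ∀ m n : ℤ, φ m * φ n + φ n * φ m =
      if m = -n then (2 * (-1 : ℂ) ^ m) • (1 : U) else 0) :
    (fun k => mulSame (phiPlus φ) (phiPlus φ) k - mulSame (phiMinus φ) (phiMinus φ) k) =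
      fun k : ℤ => if k = 0 then (1 : U) else 0 := by
  funext k
  have hplus : mulSame (phiPlus φ) (phiPlus φ) k
      = ∑ m ∈ Finset.Icc 0 k, φ m * φ (k - m) := by
    rw [mulSame, finsum_eq_sum_of_support_subset _ (s := Finset.Icc 0 k)]
    · refine Finset.sum_congr rfl fun m hm => ?_
      simp only [Finset.mem_Icc] at hm
      simp [phiPlus, hm.1, sub_nonneg.mpr hm.2, not_lt.mpr hm.2]
    · intro m hm
      simp only [Function.mem_support, phiPlus] at hm
      by_contra hmem
      simp only [Finset.coe_Icc, Set.mem_Icc, not_and_or, not_le] at hmem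
      rcases hmem with h1 | h2
      · simp [not_le.mpr h1] at hm
      · have : ¬ (0 ≤ k - m) := by omega
        simp [this] at hm
        exact absurd hm.1 (not_le.mpr h2)
  have hminus : mulSame (phiMinus φ) (phiMinus φ) k
      = ∑ m ∈ Finset.Ioo k 0, φ m * φ (k - m) := by
    rw [mulSame, finsum_eq_sum_of_support_subset _ (s := Finset.Ioo k 0)]
    · refine Finset.sum_congr rfl fun m hm => ?_
      simp only [Finset.mem_Ioo] at hm
      have : k - m < 0 := by omega
      simp [phiMinus, hm.2, this]
    · intro m hm
      simp only [Function.mem_support, phiMinus] at hm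
      by_contra hmem
      simp only [Finset.coe_Ioo, Set.mem_Ioo, not_and_or, not_lt] at hmem
      rcases hmem with h1 | h2
      · have : ¬ (k - m < 0) := by omega
        simp [this] at hm
      · simp [not_lt.mpr h2] at hm
  rw [hplus, hminus]
  by_cases hk : k = 0
  · subst hk
    simp only [Finset.Icc_self, Finset.sum_singleton, Finset.Ioo_self, Finset.sum_empty,
      sub_zero, if_pos rfl, sub_zero]
    have h00 := h 0 0
    simp only [neg_zero, if_pos rfl, zpow_zero, mul_one] at h00
    refine half_cancel ?_
    rw [h00, two_smul, one_add_one_eq_two]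
    norm_num [two_smul]
  · rw [if_neg hk]
    have key : ∀ s : Finset ℤ, (∀ m ∈ s, k - m ∈ s) →
        (∑ m ∈ s, φ m * φ (k - m)) = 0 := by
      intro s hs
      refine half_cancel ?_
      have hswap : (∑ m ∈ s, φ m * φ (k - m)) = ∑ m ∈ s, φ (k - m) * φ m := by
        refine Finset.sum_nbij' (fun m => k - m) (fun m => k - m) hs hs
          (fun a _ => by ring) (fun a _ => by ring) (fun a _ => ?_)
        simp [sub_sub_cancel]
      nth_rewrite 2 [hswap]
      rw [← Finset.sum_add_distrib]
      have : ∀ m ∈ s, φ m * φ (k - m) + φ (k - m) * φ m = 0 := by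
        intro m _
        rw [h m (k - m), if_neg (by omega)]
      rw [Finset.sum_congr rfl this]
      simp
    rw [key _ (fun m hm => by simp only [Finset.mem_Icc] at *; omega),
        key _ (fun m hm => by simp only [Finset.mem_Ioo] at *; omega)]
    simp


end
end

section
/- Let U be a unital associative ℂ-algebra and let φ_n ∈ U (n ∈ ℤ) satisfy φ_mφ_n + φ_nφ_m = 2(−1)^m δ_{m,−n}·1 for all m, n ∈ ℤ. Set φ(z) := Σ_{n∈ℤ} φ_n z^n, φ(z)_+ := Σ_{n≥0} φ_n z^n, φ(z)_− := Σ_{n<0} φ_n z^n, :φ(z)φ(w): := φ(z)_+φ(w) − φ(w)φ(z)_−, and Φ(z,w) := :φ(z)φ(w): − 1. Then Φ(w,z) = −Φ(z,w) in U[[z^{±1},w^{±1}]]. -/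
/- One-variable formal distributions in `U[[z^{±1}]]` are encoded as coefficient functions
`ℤ → U`; products of distributions in distinct variables are coefficientwise, so a two-variable
distribution in `U[[z^{±1},w^{±1}]]` is `ℤ → ℤ → U` (first index: power of `z`, second: power of
`w`). -/

noncomputable section

/-- The normal ordered product `:φ(z)φ(w): = φ(z)_+φ(w) − φ(w)φ(z)_−` (coefficientwise,
first index: power of `z`, second: power of `w`). -/
def normOrdB {U : Type*} [Ring U] (φ : ℤ → U) : ℤ → ℤ → U :=
  fun p q => phiPlus φ p * φ q - φ q * phiMinus φ p

/-- `Φ(z,w) := :φ(z)φ(w): − 1`. -/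
def PhiB {U : Type*} [Ring U] (φ : ℤ → U) : ℤ → ℤ → U :=
  fun p q => normOrdB φ p q - (if p = 0 ∧ q = 0 then (1 : U) else 0)
/-- If `φ_mφ_n + φ_nφ_m = 2(−1)^m δ_{m,−n}·1` (type B free fermion), then
`Φ(w,z) = −Φ(z,w)`. -/
theorem PhiB_antisymmetric {U : Type*} [Ring U] [Algebra ℂ U] (φ : ℤ → U)
    (h : ∀ m n : ℤ, φ m * φ n + φ n * φ m =
      if m = -n then (2 * (-1 : ℂ) ^ m) • (1 : U) else 0) :
    ∀ p q : ℤ, PhiB φ q p = - PhiB φ p q := by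
  intro p q
  apply eq_neg_of_add_eq_zero_left
  have hc := h q p
  have hc2 := h p q
  simp only [PhiB, normOrdB, phiPlus, phiMinus]
  rcases le_or_gt 0 q with hq | hq <;> rcases le_or_gt 0 p with hp | hp
  · simp only [if_pos hq, if_pos hp, if_neg (not_lt.2 hq), if_neg (not_lt.2 hp),
      mul_zero, zero_mul, sub_zero]
    by_cases h0 : p = 0 ∧ q = 0
    · obtain ⟨rfl, rfl⟩ := h0
      rw [if_pos (show (0:ℤ) = -0 by norm_num)] at hc
      simp only [and_self, if_pos]
      rw [show ((2 * (-1:ℂ)^(0:ℤ)) • (1:U)) = 1 + 1 by norm_num [two_smul]] at hc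
      rw [show φ 0 * φ 0 - 1 + (φ 0 * φ 0 - 1) = (φ 0 * φ 0 + φ 0 * φ 0) - (1 + 1) by abel,
        hc, sub_self]
    · have hqp : ¬ (q = -p) := by omega
      rw [if_neg hqp] at hc
      have h0' : ¬ (q = 0 ∧ p = 0) := fun ⟨a, b⟩ => h0 ⟨b, a⟩
      rw [if_neg h0', if_neg h0, sub_zero, sub_zero]
      exact hc
  · have t1 : ¬ (q = 0 ∧ p = 0) := by omega
    have t2 : ¬ (p = 0 ∧ q = 0) := by omega
    simp only [if_pos hq, if_neg (not_le.2 hp), if_pos hp, if_neg (not_lt.2 hq),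
      if_neg t1, if_neg t2, mul_zero, zero_mul, sub_zero, zero_mul, zero_sub]
    abel
  · have t1 : ¬ (q = 0 ∧ p = 0) := by omega
    have t2 : ¬ (p = 0 ∧ q = 0) := by omega
    simp only [if_neg (not_le.2 hq), if_pos hp, if_pos hq, if_neg (not_lt.2 hp),
      if_neg t1, if_neg t2, mul_zero, zero_mul, sub_zero, zero_sub]
    abel
  · have hqp : ¬ (p = -q) := by omega
    have t1 : ¬ (q = 0 ∧ p = 0) := by omega
    have t2 : ¬ (p = 0 ∧ q = 0) := by omega
    rw [if_neg hqp] at hc2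
    simp only [if_neg (not_le.2 hq), if_neg (not_le.2 hp), if_pos hq, if_pos hp,
      if_neg t1, if_neg t2, zero_mul, zero_sub, sub_zero]
    rw [← neg_add, hc2, neg_zero]
end
end

section
/- Let U be a unital associative ℂ-algebra and let φ_n ∈ U, indexed by half-integers n ∈ ℤ+1/2, satisfy φ_mφ_n − φ_nφ_m = (−1)^{n−1/2} δ_{m,−n}·1 for all m, n ∈ ℤ+1/2. Set φ(z) := Σ_{n∈ℤ+1/2} φ_n z^{n−1/2} (all exponents are integers), φ(z)_+ := Σ_{n≥1/2} φ_n z^{n−1/2}, φ(z)_− := Σ_{n≤−1/2} φ_n z^{n−1/2}, and :φ(z)φ(w): := φ(z)_+φ(w) + φ(w)φ(z)_−. Then in U[[z₁^{±1},w₁^{±1},z₂^{±1},w₂^{±1}]]: [:φ(z₁)φ(w₁):, :φ(z₂)φ(w₂):] = δ(z₁+z₂)·:φ(w₁)φ(w₂): + δ(z₁+w₂)·:φ(w₁)φ(z₂): + δ(w₁+z₂)·:φ(z₁)φ(w₂): + δ(w₁+w₂)·:φ(z₁)φ(z₂): + H(z₁,z₂)H(w₁,w₂) − H(z₂,z₁)H(w₂,w₁)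 + H(z₁,w₂)H(w₁,z₂) − H(z₂,w₁)H(w₂,z₁), where δ(x+y) := Σ_{n∈ℤ} (−1)^{n+1} x^n y^{−n−1} and H(x,y) := Σ_{k≥0} (−1)^k x^{−k−1} y^k (the expansion i_{x,y} of 1/(x+y) in nonnegative powers of y). -/
/- The modes of the free twisted boson of type C are indexed by half-integers `n ∈ ℤ+1/2`;
we encode them by `ψ : ℤ → U` where `ψ r` stands for `φ_{r+1/2}`.  Thus `δ_{m,−n}` becomes
`r + s = −1` and `(−1)^{n−1/2}` becomes `(−1)^s`.  The field `φ(z) = Σ_{n∈ℤ+1/2} φ_n z^{n−1/2}`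
has `z^k` coefficient `ψ k`; `φ(z)_+ = Σ_{n≥1/2} φ_n z^{n−1/2}` is its part with nonnegative
powers of `z` and `φ(z)_− = Σ_{n≤−1/2} φ_n z^{n−1/2}` its part with negative powers.
Products of distributions in pairwise distinct variables are coefficientwise, so elements of
`U[[z₁^{±1},w₁^{±1},z₂^{±1},w₂^{±1}]]` are encoded by their coefficients at
`z₁^{p₁} w₁^{q₁} z₂^{p₂} w₂^{q₂}`. -/

noncomputable section

/-- The normal ordered product `:φ(z)φ(w): = φ(z)_+φ(w) + φ(w)φ(z)_−` (even parity),
coefficientwise (first index: power of `z`, second: power of `w`). -/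
def normOrdC {U : Type*} [Ring U] (ψ : ℤ → U) : ℤ → ℤ → U :=
  fun p q => (if 0 ≤ p then ψ p else 0) * ψ q + ψ q * (if p < 0 then ψ p else 0)

/-- The coefficients of `δ(x+y) := Σ_{n∈ℤ} (−1)^{n+1} x^n y^{−n−1}`. -/
def deltaPlusC : ℤ → ℤ → ℂ := fun a b => if b = -a - 1 then (-1 : ℂ) ^ (a + 1) else 0

/-- The coefficients of `H(x,y) := Σ_{k≥0} (−1)^k x^{−k−1} y^k`
(the expansion `i_{x,y}` of `1/(x+y)`). -/
def HC : ℤ → ℤ → ℂ := fun a b => if 0 ≤ b ∧ a = -b - 1 then (-1 : ℂ) ^ b else 0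

set_option linter.unusedSectionVars false

lemma m1neg (a : ℤ) : (-1:ℂ)^(-a-1) = -(-1:ℂ)^a := by
  have h : (-a-1 : ℤ) = -(a+1) := by ring
  rw [h, zpow_neg, zpow_add₀ (by norm_num : (-1:ℂ) ≠ 0), zpow_one,
    mul_inv, ← inv_zpow, inv_neg, inv_one]
  ring

def EE : ℤ → ℤ → ℂ := fun r s => if r + s = -1 then (-1 : ℂ) ^ s else 0

lemma deltaE (a b : ℤ) : deltaPlusC a b = EE a b := by
  unfold deltaPlusC EE
  by_cases hc : a + b = -1
  · rw [if_pos (by omega), if_pos hc, show b = -a-1 by omega, m1neg,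
      zpow_add₀ (by norm_num : (-1:ℂ) ≠ 0), zpow_one]
    ring
  · rw [if_neg (by omega), if_neg hc]

lemma EE_swap (a b : ℤ) : EE a b = -EE b a := by
  unfold EE
  by_cases hc : a + b = -1
  · rw [if_pos hc, if_pos (by omega), show b = -a-1 by omega, m1neg]; try ring
  · rw [if_neg hc, if_neg (by omega)]; try ring

lemma HC_nonneg {a : ℤ} (ha : 0 ≤ a) (b : ℤ) : HC a b = 0 := by
  unfold HC; rw [if_neg (by omega)]

lemma HC_arg2 {b : ℤ} (hb : b < 0) (a : ℤ) : HC a b = 0 := by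
  unfold HC; rw [if_neg (by omega)]

lemma HC_neg {a : ℤ} (ha : a < 0) (b : ℤ) : HC a b = EE a b := by
  unfold HC EE
  by_cases hc : a + b = -1
  · rw [if_pos ⟨by omega, by omega⟩, if_pos hc]
  · rw [if_neg (by omega), if_neg hc]

lemma HC_rev {a : ℤ} (ha : 0 ≤ a) (b : ℤ) : HC b a = -EE a b := by
  unfold HC EE
  by_cases hc : a + b = -1
  · rw [if_pos ⟨ha, by omega⟩, if_pos hc, show b = -a-1 by omega, m1neg]; try ring
  · rw [if_neg (by omega), if_neg hc]; try ring


section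
variable {U : Type*} [Ring U] [Algebra ℂ U] (ψ : ℤ → U)

lemma h' (h : ∀ r s : ℤ, ψ r * ψ s - ψ s * ψ r =
      if r + s = -1 then ((-1 : ℂ) ^ s) • (1 : U) else 0)
    (r s : ℤ) : ψ r * ψ s - ψ s * ψ r = EE r s • (1:U) := by
  rw [h]; unfold EE; split_ifs <;> simp

lemma hcomm (h : ∀ r s : ℤ, ψ r * ψ s - ψ s * ψ r =
      if r + s = -1 then ((-1 : ℂ) ^ s) • (1 : U) else 0)
    (r s : ℤ) : ψ r * ψ s = ψ s * ψ r + EE r s • (1:U) := by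
  have := h' ψ h r s; linear_combination (norm := noncomm_ring) this

lemma quadRing (A B C D : U) : A*B*(C*D) - C*D*(A*B) =
    A*(B*C - C*B)*D + A*C*(B*D - D*B) + (A*C - C*A)*(D*B) + C*(A*D - D*A)*B := by
  noncomm_ring

lemma quad (h : ∀ r s : ℤ, ψ r * ψ s - ψ s * ψ r =
      if r + s = -1 then ((-1 : ℂ) ^ s) • (1 : U) else 0)
    (a b c d : ℤ) : ψ a * ψ b * (ψ c * ψ d) - ψ c * ψ d * (ψ a * ψ b) =
    EE b c • (ψ a * ψ d) + EE b d • (ψ a * ψ c)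
    + EE a c • (ψ d * ψ b) + EE a d • (ψ c * ψ b) := by
  rw [quadRing, h' ψ h b c, h' ψ h b d, h' ψ h a c, h' ψ h a d]
  simp only [mul_smul_comm, smul_mul_assoc, mul_one, one_mul]

lemma normOrd_pos {p : ℤ} (q : ℤ) (hp : 0 ≤ p) : normOrdC ψ p q = ψ p * ψ q := by
  unfold normOrdC; rw [if_pos hp, if_neg (by omega)]; simp

lemma normOrd_neg {p : ℤ} (q : ℤ) (hp : p < 0) : normOrdC ψ p q = ψ q * ψ p := by
  unfold normOrdC; rw [if_neg (by omega), if_pos hp]; simp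

lemma commN (h : ∀ r s : ℤ, ψ r * ψ s - ψ s * ψ r =
      if r + s = -1 then ((-1 : ℂ) ^ s) • (1 : U) else 0)
    (a b p q : ℤ) :
    ψ a * ψ b * normOrdC ψ p q - normOrdC ψ p q * (ψ a * ψ b) =
    EE b p • (ψ a * ψ q) + EE b q • (ψ a * ψ p)
    + EE a p • (ψ q * ψ b) + EE a q • (ψ p * ψ b) := by
  rcases le_or_gt 0 p with hp | hp
  · rw [normOrd_pos ψ q hp, quad ψ h]
  · rw [normOrd_neg ψ q hp, quad ψ h]; module

end

/-- The commutator identity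
`[:φ(z₁)φ(w₁):, :φ(z₂)φ(w₂):] = δ(z₁+z₂):φ(w₁)φ(w₂): + δ(z₁+w₂):φ(w₁)φ(z₂):
+ δ(w₁+z₂):φ(z₁)φ(w₂): + δ(w₁+w₂):φ(z₁)φ(z₂): + H(z₁,z₂)H(w₁,w₂) − H(z₂,z₁)H(w₂,w₁)
+ H(z₁,w₂)H(w₁,z₂) − H(z₂,w₁)H(w₂,z₁)` for the type C twisted boson.  (This is the content of
the statement that `E^C(z,w) ↦ i:φ(z)φ(w):`, `c ↦ ½·1` is a representation of `c_∞`.) -/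
theorem typeC_normal_ordered_commutator {U : Type*} [Ring U] [Algebra ℂ U] (ψ : ℤ → U)
    (h : ∀ r s : ℤ, ψ r * ψ s - ψ s * ψ r =
      if r + s = -1 then ((-1 : ℂ) ^ s) • (1 : U) else 0) :
    ∀ p₁ q₁ p₂ q₂ : ℤ,
      normOrdC ψ p₁ q₁ * normOrdC ψ p₂ q₂ - normOrdC ψ p₂ q₂ * normOrdC ψ p₁ q₁ =
        deltaPlusC p₁ p₂ • normOrdC ψ q₁ q₂
        + deltaPlusC p₁ q₂ • normOrdC ψ q₁ p₂
        + deltaPlusC q₁ p₂ • normOrdC ψ p₁ q₂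
        + deltaPlusC q₁ q₂ • normOrdC ψ p₁ p₂
        + (HC p₁ p₂ * HC q₁ q₂ - HC p₂ p₁ * HC q₂ q₁
            + HC p₁ q₂ * HC q₁ p₂ - HC p₂ q₁ * HC q₂ p₁) • (1 : U) := by
  intro p₁ q₁ p₂ q₂
  simp only [deltaE]
  rcases le_or_gt 0 p₁ with hp1 | hp1 <;> rcases le_or_gt 0 q₁ with hq1 | hq1
  · -- A : 0 ≤ p₁, 0 ≤ q₁
    rw [normOrd_pos ψ q₁ hp1, normOrd_pos ψ q₂ hp1, normOrd_pos ψ p₂ hp1,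
      normOrd_pos ψ q₂ hq1, normOrd_pos ψ p₂ hq1,
      commN ψ h p₁ q₁ p₂ q₂,
      HC_nonneg hp1 p₂, HC_nonneg hp1 q₂, HC_nonneg hq1 q₂, HC_nonneg hq1 p₂,
      HC_rev hp1 p₂, HC_rev hp1 q₂, HC_rev hq1 q₂, HC_rev hq1 p₂,
      hcomm ψ h q₁ q₂, hcomm ψ h q₁ p₂]
    module
  · -- B : 0 ≤ p₁, q₁ < 0
    rw [normOrd_pos ψ q₁ hp1, normOrd_pos ψ q₂ hp1, normOrd_pos ψ p₂ hp1,
      normOrd_neg ψ q₂ hq1, normOrd_neg ψ p₂ hq1,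
      commN ψ h p₁ q₁ p₂ q₂,
      HC_nonneg hp1 p₂, HC_nonneg hp1 q₂, HC_arg2 hq1 q₂, HC_arg2 hq1 p₂,
      HC_neg hq1 q₂, HC_neg hq1 p₂, HC_rev hp1 p₂, HC_rev hp1 q₂]
    module
  · -- C : p₁ < 0, 0 ≤ q₁
    rw [normOrd_neg ψ q₁ hp1, normOrd_neg ψ q₂ hp1, normOrd_neg ψ p₂ hp1,
      normOrd_pos ψ q₂ hq1, normOrd_pos ψ p₂ hq1,
      commN ψ h q₁ p₁ p₂ q₂,
      HC_neg hp1 p₂, HC_neg hp1 q₂, HC_nonneg hq1 q₂, HC_nonneg hq1 p₂,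
      HC_arg2 hp1 p₂, HC_arg2 hp1 q₂, HC_rev hq1 q₂, HC_rev hq1 p₂]
    module
  · -- D : p₁ < 0, q₁ < 0
    rw [normOrd_neg ψ q₁ hp1, normOrd_neg ψ q₂ hp1, normOrd_neg ψ p₂ hp1,
      normOrd_neg ψ q₂ hq1, normOrd_neg ψ p₂ hq1,
      commN ψ h q₁ p₁ p₂ q₂,
      HC_neg hp1 p₂, HC_neg hp1 q₂, HC_neg hq1 q₂, HC_neg hq1 p₂,
      HC_arg2 hp1 p₂, HC_arg2 hp1 q₂, HC_arg2 hq1 q₂, HC_arg2 hq1 p₂,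
      hcomm ψ h q₂ q₁, hcomm ψ h p₂ q₁, EE_swap q₂ q₁, EE_swap p₂ q₁]
    module

end
end

section
/- Let U be a unital associative ℂ-algebra and let φ_n ∈ U, indexed by half-integers n ∈ ℤ+1/2, satisfy φ_mφ_n + φ_nφ_m = δ_{m,−n}·1 for all m, n ∈ ℤ+1/2. Set φ(z) := Σ_{n∈ℤ+1/2} φ_n z^{−n−1/2} (all exponents are integers), φ(z)_+ := Σ_{n≤−1/2} φ_n z^{−n−1/2}, φ(z)_− := Σ_{n≥1/2} φ_n z^{−n−1/2}, and :φ(z)φ(w): := φ(z)_+φ(w) − φ(w)φ(z)_−. Then in U[[z₁^{±1},w₁^{±1},z₂^{±1},w₂^{±1}]]: [:φ(z₁)φ(w₁):, :φ(z₂)φ(w₂):] = −δ(z₁−z₂)·:φ(w₁)φ(w₂): + δ(z₁−w₂)·:φ(w₁)φ(z₂): + δ(w₁−z₂)·:φ(z₁)φ(w₂): − δ(w₁−w₂)·:φ(z₁)φ(z₂): − K(z₁,z₂)K(w₁,w₂) + K(z₁,w₂)K(w₁,z₂) + K(z₂,z₁)K(w₂,w₁) − K(z₂,w₁)K(w₂,z₁),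 where δ(x−y) := Σ_{n∈ℤ} x^n y^{−n−1} and K(x,y) := Σ_{k≥0} x^{−k−1} y^k (the expansion i_{x,y} of 1/(x−y) in nonnegative powers of y). -/
/- The modes of the free neutral fermion of type D are indexed by half-integers `n ∈ ℤ+1/2`;
we encode them by `ψ : ℤ → U` where `ψ r` stands for `φ_{r+1/2}`.  Thus `δ_{m,−n}` becomes
`r + s = −1`.  The field `φ(z) = Σ_{n∈ℤ+1/2} φ_n z^{−n−1/2}` has `z^k` coefficient `ψ (−k−1)`;
`φ(z)_+ = Σ_{n≤−1/2} φ_n z^{−n−1/2}` is its part with nonnegative powers of `z`, and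
`φ(z)_− = Σ_{n≥1/2} φ_n z^{−n−1/2}` its part with negative powers.  Products of distributions
in pairwise distinct variables are coefficientwise, so elements of
`U[[z₁^{±1},w₁^{±1},z₂^{±1},w₂^{±1}]]` are encoded by their coefficients at
`z₁^{p₁} w₁^{q₁} z₂^{p₂} w₂^{q₂}`. -/

noncomputable section

/-- The `z^k`-coefficient of `φ(z)`. -/
def fieldD {U : Type*} (ψ : ℤ → U) : ℤ → U := fun k => ψ (-k - 1)

/-- The normal ordered product `:φ(z)φ(w): = φ(z)_+φ(w) − φ(w)φ(z)_−` (odd parity),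
coefficientwise (first index: power of `z`, second: power of `w`). -/
def normOrdD {U : Type*} [Ring U] (ψ : ℤ → U) : ℤ → ℤ → U :=
  fun p q => (if 0 ≤ p then fieldD ψ p else 0) * fieldD ψ q
    - fieldD ψ q * (if p < 0 then fieldD ψ p else 0)

/-- The coefficients of `δ(x−y) := Σ_{n∈ℤ} x^n y^{−n−1}`. -/
def deltaMinusC : ℤ → ℤ → ℂ := fun a b => if b = -a - 1 then (1 : ℂ) else 0

/-- The coefficients of `K(x,y) := Σ_{k≥0} x^{−k−1} y^k`
(the expansion `i_{x,y}` of `1/(x−y)`). -/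
def KC : ℤ → ℤ → ℂ := fun a b => if 0 ≤ b ∧ a = -b - 1 then (1 : ℂ) else 0


private lemma delta_eq_K (x y : ℤ) : deltaMinusC x y = KC x y + KC y x := by
  simp only [deltaMinusC, KC]
  split_ifs <;> first | (exfalso; omega) | norm_num

private lemma key_comm {U : Type*} [Ring U] (A B C D : U) :
    A * B * (C * D) - C * D * (A * B) =
      A * ((B * C + C * B) * D) - A * C * (B * D + D * B)
        + (A * C + C * A) * (D * B) - C * ((A * D + D * A) * B) := by
  noncomm_ring

private lemma anti_comm {U : Type*} [Ring U] [Algebra ℂ U] (ψ : ℤ → U)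
    (h : ∀ r s : ℤ, ψ r * ψ s + ψ s * ψ r = if r + s = -1 then (1 : U) else 0)
    (p q : ℤ) :
    fieldD ψ p * fieldD ψ q + fieldD ψ q * fieldD ψ p = deltaMinusC p q • (1 : U) := by
  simp only [fieldD, deltaMinusC, h]
  by_cases hc : q = -p - 1
  · rw [if_pos (by omega), if_pos hc, one_smul]
  · rw [if_neg (by omega), if_neg hc, zero_smul]

private lemma norm_eq {U : Type*} [Ring U] [Algebra ℂ U] (ψ : ℤ → U)
    (h : ∀ r s : ℤ, ψ r * ψ s + ψ s * ψ r = if r + s = -1 then (1 : U) else 0)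
    (p q : ℤ) :
    normOrdD ψ p q = fieldD ψ p * fieldD ψ q - KC p q • (1 : U) := by
  unfold normOrdD
  by_cases hp : 0 ≤ p
  · rw [if_pos hp, if_neg (by omega)]
    have hK : KC p q = 0 := by
      simp only [KC]; rw [if_neg]; rintro ⟨h1, h2⟩; omega
    simp [hK]
  · rw [if_neg hp, if_pos (by omega)]
    have hK : KC p q = deltaMinusC p q := by
      simp only [KC, deltaMinusC]; split_ifs with h1 h2 <;> first | rfl | omega
    have ha := anti_comm ψ h p q
    rw [hK, zero_mul, zero_sub, eq_sub_iff_add_eq, ← ha]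
    abel

/-- The commutator identity
`[:φ(z₁)φ(w₁):, :φ(z₂)φ(w₂):] = −δ(z₁−z₂):φ(w₁)φ(w₂): + δ(z₁−w₂):φ(w₁)φ(z₂):
+ δ(w₁−z₂):φ(z₁)φ(w₂): − δ(w₁−w₂):φ(z₁)φ(z₂): − K(z₁,z₂)K(w₁,w₂) + K(z₁,w₂)K(w₁,z₂)
+ K(z₂,z₁)K(w₂,w₁) − K(z₂,w₁)K(w₂,z₁)` for the type D fermion.  (This is the content of the
statement that `E^D(z,w) ↦ :φ(z)φ(w):`, `c ↦ 1` is a representation of `d_∞`.) -/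
theorem typeD_normal_ordered_commutator {U : Type*} [Ring U] [Algebra ℂ U] (ψ : ℤ → U)
    (h : ∀ r s : ℤ, ψ r * ψ s + ψ s * ψ r = if r + s = -1 then (1 : U) else 0) :
    ∀ p₁ q₁ p₂ q₂ : ℤ,
      normOrdD ψ p₁ q₁ * normOrdD ψ p₂ q₂ - normOrdD ψ p₂ q₂ * normOrdD ψ p₁ q₁ =
        - deltaMinusC p₁ p₂ • normOrdD ψ q₁ q₂
        + deltaMinusC p₁ q₂ • normOrdD ψ q₁ p₂
        + deltaMinusC q₁ p₂ • normOrdD ψ p₁ q₂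
        - deltaMinusC q₁ q₂ • normOrdD ψ p₁ p₂
        + (- KC p₁ p₂ * KC q₁ q₂ + KC p₁ q₂ * KC q₁ p₂
            + KC p₂ p₁ * KC q₂ q₁ - KC p₂ q₁ * KC q₂ p₁) • (1 : U) := by
  intro p₁ q₁ p₂ q₂
  have hn := norm_eq ψ h
  rw [hn p₁ q₁, hn p₂ q₂, hn q₁ q₂, hn q₁ p₂, hn p₁ q₂, hn p₁ p₂]
  set A := fieldD ψ p₁ with hA
  set B := fieldD ψ q₁ with hB
  set C := fieldD ψ p₂ with hC
  set D := fieldD ψ q₂ with hD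
  have e1 : B * C + C * B = deltaMinusC q₁ p₂ • (1 : U) := anti_comm ψ h q₁ p₂
  have e2 : B * D + D * B = deltaMinusC q₁ q₂ • (1 : U) := anti_comm ψ h q₁ q₂
  have e3 : A * C + C * A = deltaMinusC p₁ p₂ • (1 : U) := anti_comm ψ h p₁ p₂
  have e4 : A * D + D * A = deltaMinusC p₁ q₂ • (1 : U) := anti_comm ψ h p₁ q₂
  have hDB : D * B = deltaMinusC q₁ q₂ • (1 : U) - B * D := by rw [← e2]; abel
  have hCB : C * B = deltaMinusC q₁ p₂ • (1 : U) - B * C := by rw [← e1]; abel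
  have expand : (A * B - KC p₁ q₁ • (1 : U)) * (C * D - KC p₂ q₂ • (1 : U))
      - (C * D - KC p₂ q₂ • (1 : U)) * (A * B - KC p₁ q₁ • (1 : U))
      = A * B * (C * D) - C * D * (A * B) := by
    simp only [sub_mul, mul_sub, smul_mul_assoc, mul_smul_comm, one_mul, mul_one, smul_smul]
    module
  rw [expand, key_comm, e1, e2, e3, e4]
  simp only [mul_smul_comm, smul_mul_assoc, one_mul, mul_one]
  rw [hDB, hCB]
  simp only [delta_eq_K]
  module


end
end
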